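/- arXiv:2410.13981 — 8 statements merged into one kernel-verified Lean document; each statement's English description precedes it below -/
import Mathlib

section
/- For every d ∈ ℕ and every θ ≥ 0 there exist matrices W₁ ∈ ℝ^{(8d+8)×(2d+2)}, W₂ ∈ ℝ^{(2d+2)×(8d+8)} and a vector b ∈ ℝ^{8d+8} such that for every h ∈ ℝ^{2d+2}, h + W₂·ReLU(W₁ h + b) = (h_1, …, h_{d+1}, [S_θ(h_{d+2:2d+1})]_1, …, [S_θ(h_{d+2:2d+1})]_d, h_{2d+2}); that is, a single ReLU MLP layer applies the soft-thresholding operator to coordinates d+2 through 2d+1 while leaving all other coordinates unchanged. -/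
/-!
Soft thresholding is a difference of two shifted ReLUs, `S_θ t = relu (t - θ) - relu (-t - θ)`,
and the identity a difference of two unshifted ones, `t = relu t - relu (-t)`. So `S_θ t - t` is
computed by four ReLU neurons reading the scalar `t`. A residual layer with one such block of four
neurons per coordinate, whose output weights vanish outside the chosen window, has width
`4 · (2d + 2) = 8d + 8`.
-/

open Matrix

noncomputable def relu (t : ℝ) : ℝ := max t 0

noncomputable def softThreshold (θ t : ℝ) : ℝ := Real.sign t * max 0 (|t| - θ)

lemma relu_sub_relu_neg (t : ℝ) : relu t - relu (-t) = t := by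
  unfold relu
  rcases le_total t 0 with ht | ht
  · rw [max_eq_right ht, max_eq_left (neg_nonneg.mpr ht)]; ring
  · rw [max_eq_left ht, max_eq_right (neg_nonpos.mpr ht)]; ring

lemma softThreshold_eq_relu_sub_relu {θ : ℝ} (hθ : 0 ≤ θ) (t : ℝ) :
    softThreshold θ t = relu (t - θ) - relu (-t - θ) := by
  unfold softThreshold relu
  rcases lt_trichotomy t 0 with ht | rfl | ht
  · rw [Real.sign_of_neg ht, abs_of_neg ht, max_eq_right (by linarith : t - θ ≤ 0),
      max_comm (-t - θ)]
    ring
  · simp [max_eq_right (by linarith : -θ ≤ 0)]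
  · rw [Real.sign_of_pos ht, abs_of_pos ht, max_eq_right (by linarith : -t - θ ≤ 0),
      max_comm (t - θ)]
    ring

lemma add_sum_relu_eq_softThreshold {θ : ℝ} (hθ : 0 ≤ θ) (t : ℝ) :
    t + ∑ k : Fin 4, ![1, -1, -1, 1] k * relu (![1, -1, 1, -1] k * t + ![-θ, -θ, 0, 0] k) =
      softThreshold θ t := by
  simp only [Fin.sum_univ_four, cons_val_zero, cons_val_one, cons_val, one_mul, neg_mul, add_zero,
    ← sub_eq_add_neg, softThreshold_eq_relu_sub_relu hθ]
  linarith [relu_sub_relu_neg t]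

section MLPLayer

variable {ι κ κ' : Type*} [Fintype ι] [Fintype κ] [Fintype κ']

noncomputable def mlpLayer (W₁ : Matrix κ ι ℝ) (W₂ : Matrix ι κ ℝ) (b : κ → ℝ) (h : ι → ℝ) :
    ι → ℝ :=
  h + W₂ *ᵥ fun t => relu ((W₁ *ᵥ h + b) t)

lemma mlpLayer_reindex (e : κ ≃ κ') (W₁ : Matrix κ ι ℝ) (W₂ : Matrix ι κ ℝ) (b : κ → ℝ) :
    mlpLayer (W₁.submatrix e.symm id) (W₂.submatrix id e.symm) (b ∘ e.symm) =
      mlpLayer W₁ W₂ b := by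
  ext h i
  have hW₁ : W₁.submatrix e.symm id *ᵥ h = (W₁ *ᵥ h) ∘ e.symm := rfl
  simp [mlpLayer, submatrix_mulVec_equiv, hW₁, Function.comp_def]

lemma exists_mlpLayer_eq_ite [DecidableEq ι] (a β c : κ → ℝ) {f : ℝ → ℝ}
    (hf : ∀ t, t + ∑ k, c k * relu (a k * t + β k) = f t) (p : ι → Prop) [DecidablePred p] :
    ∃ (W₁ : Matrix (κ × ι) ι ℝ) (W₂ : Matrix ι (κ × ι) ℝ) (b : κ × ι → ℝ),
      ∀ h i, mlpLayer W₁ W₂ b h i = if p i then f (h i) else h i := by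
  let W₁ : Matrix (κ × ι) ι ℝ := of fun x j => if x.2 = j then a x.1 else 0
  let W₂ : Matrix ι (κ × ι) ℝ := of fun i x => if p i ∧ x.2 = i then c x.1 else 0
  refine ⟨W₁, W₂, fun x => β x.1, fun h i => ?_⟩
  have hW₁ : ∀ x, (W₁ *ᵥ h) x = a x.1 * h x.2 := by
    simp [W₁, mulVec, dotProduct]
  have hW₂ : ∀ v, (W₂ *ᵥ v) i = if p i then ∑ k, c k * v (k, i) else 0 := by
    intro v
    split_ifs with hi <;> simp [W₂, mulVec, dotProduct, hi, Fintype.sum_prod_type]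
  simp only [mlpLayer, Pi.add_apply, hW₁, hW₂]
  split_ifs
  · exact hf (h i)
  · exact add_zero _

end MLPLayer

/-- for every d and every θ ≥ 0 there are W₁ ∈ ℝ^{(8d+8)×(2d+2)},
W₂ ∈ ℝ^{(2d+2)×(8d+8)} and b ∈ ℝ^{8d+8} such that the ReLU MLP layer
h ↦ h + W₂·ReLU(W₁h + b) applies the soft-thresholding operator
S_θ(t) = sign(t)·max(0,|t| − θ) to coordinates d+2,…,2d+1 (1-based) while leaving all
other coordinates unchanged. -/
theorem stmt_2 (d : ℕ) (θ : ℝ) (hθ : 0 ≤ θ) :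
    ∃ (W₁ : Matrix (Fin (8 * d + 8)) (Fin (2 * d + 2)) ℝ)
      (W₂ : Matrix (Fin (2 * d + 2)) (Fin (8 * d + 8)) ℝ)
      (b : Fin (8 * d + 8) → ℝ),
      ∀ (h : Fin (2 * d + 2) → ℝ) (i : Fin (2 * d + 2)),
        (h + W₂ *ᵥ fun t => relu ((W₁ *ᵥ h + b) t)) i =
          if d + 1 ≤ (i : ℕ) ∧ (i : ℕ) < 2 * d + 1 then
            Real.sign (h i) * max 0 (|h i| - θ)
          else h i := by
  obtain ⟨W₁, W₂, b, hW⟩ := exists_mlpLayer_eq_ite _ _ _ (add_sum_relu_eq_softThreshold hθ)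
    fun i : Fin (2 * d + 2) => d + 1 ≤ (i : ℕ) ∧ (i : ℕ) < 2 * d + 1
  let e : Fin 4 × Fin (2 * d + 2) ≃ Fin (8 * d + 8) := finProdFinEquiv.trans (finCongr (by ring))
  refine ⟨W₁.submatrix e.symm id, W₂.submatrix id e.symm, b ∘ e.symm, fun h i => ?_⟩
  exact (congrFun (congrFun (mlpLayer_reindex e W₁ W₂ b) h) i).trans (hW h i)
end

section
/- Let X, D ∈ ℝ^{N×d}, let β* ∈ ℝ^d have support 𝕊 = supp(β*) with |𝕊| ≤ S, let y = Xβ*, and let γ > 0. Define μ_min = min_{i∈𝕊} |D_{:,i}^⊤ X_{:,i}| and μ_max = max_{i≠j} |D_{:,i}^⊤ X_{:,j}|. Suppose 0 < γ(2S−1)μ_max + |1 − γ μ_min| ≤ 1 and 0 ≤ γ D_{:,i}^⊤ X_{:,i} ≤ 1 for every i ∈ {1,…,d}. Set c₁ = ‖β*‖₁ and c₂ = −log( γ(2S−1)μ_max + |1 − γ μ_min| ). Let k ≥ 1, θ^{(k)} = γ μ_max c₁ e^{−c₂(k−2)}, and β^{(k+1)} = S_{θ^{(k)}}( β^{(k)}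 − γ D^⊤ (X β^{(k)} − y) ). If supp(β^{(k)}) ⊆ 𝕊 and ‖β^{(k)} − β*‖₁ ≤ c₁ e^{−c₂(k−2)}, then supp(β^{(k+1)}) ⊆ 𝕊 and ‖β^{(k+1)} − β*‖₁ ≤ c₁ e^{−c₂(k−1)}. -/
open Matrix

/-- ℓ₁ norm on ℝ^d. -/
noncomputable def l1 {d : ℕ} (v : Fin d → ℝ) : ℝ := ∑ i, |v i|

/-- Soft-thresholding operator: [S_θ(x)]_i = sign(x_i)·max(0, |x_i| − θ). -/
noncomputable def softThresh {d : ℕ} (θ : ℝ) (v : Fin d → ℝ) : Fin d → ℝ :=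
  fun i => Real.sign (v i) * max 0 (|v i| - θ)

/-- D_{:,i}^⊤ X_{:,j}: inner product of the i-th column of D with the j-th column of X. -/
noncomputable def colDot {N d : ℕ} (D X : Matrix (Fin N) (Fin d) ℝ) (i j : Fin d) : ℝ :=
  ∑ k, D k i * X k j

lemma soft_zero {θ x : ℝ} (hθ : 0 ≤ θ) (hx : |x| ≤ θ) :
    Real.sign x * max 0 (|x| - θ) = 0 := by
  rw [max_eq_left (by linarith), mul_zero]

lemma soft_dist {θ x : ℝ} (hθ : 0 ≤ θ) : |Real.sign x * max 0 (|x| - θ) - x| ≤ θ := by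
  rcases le_or_gt |x| θ with h | h
  · rw [max_eq_left (by linarith), mul_zero]; simpa using h
  · rw [max_eq_right (by linarith)]
    rcases lt_trichotomy x 0 with hx | hx | hx
    · rw [Real.sign_of_neg hx, abs_of_neg hx,
        show -1 * (-x - θ) - x = θ by ring, abs_of_nonneg hθ]
    · exfalso; rw [hx] at h; simp at h; linarith
    · rw [Real.sign_of_pos hx, abs_of_pos hx,
        show 1 * (x - θ) - x = -θ by ring, abs_neg, abs_of_nonneg hθ]

lemma mv_comp {N d : ℕ} (X D : Matrix (Fin N) (Fin d) ℝ) (β βstar : Fin d → ℝ) (i : Fin d) :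
    (Dᵀ *ᵥ (X *ᵥ β - X *ᵥ βstar)) i = ∑ j, colDot D X i j * (β j - βstar j) := by
  simp only [Matrix.mulVec, dotProduct, colDot, Pi.sub_apply, Matrix.transpose_apply,
    Finset.sum_mul, mul_sub, Finset.mul_sum]
  simp only [Finset.sum_sub_distrib]
  congr 1 <;> rw [Finset.sum_comm] <;>
    exact Finset.sum_congr rfl fun j _ => Finset.sum_congr rfl fun l _ => by ring


/-- one step of the LISTA iteration keeps the support inside the support 𝕊
of β* and contracts the ℓ₁ error linearly.  Here 𝕊 = supp(β*) = {i : β*_i ≠ 0},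
μ_min = min_{i∈𝕊} |D_{:,i}^⊤X_{:,i}|, μ_max = max_{i≠j} |D_{:,i}^⊤X_{:,j}|,
c₁ = ‖β*‖₁, c₂ = −log(γ(2S−1)μ_max + |1 − γμ_min|), θ^{(k)} = γ μ_max c₁ e^{−c₂(k−2)},
and β^{(k+1)} = S_{θ^{(k)}}(β^{(k)} − γD^⊤(Xβ^{(k)} − y)) with y = Xβ*. -/
theorem stmt_3 (N d S : ℕ) (X D : Matrix (Fin N) (Fin d) ℝ)
    (βstar : Fin d → ℝ)
    (hcard : Set.ncard {i : Fin d | βstar i ≠ 0} ≤ S)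
    (γ : ℝ) (hγ : 0 < γ)
    (μmin μmax : ℝ)
    (hμmin : μmin = ⨅ i : {i : Fin d // βstar i ≠ 0}, |colDot D X i.val i.val|)
    (hμmax : μmax = ⨆ p : {p : Fin d × Fin d // p.1 ≠ p.2}, |colDot D X p.val.1 p.val.2|)
    (hcond0 : 0 < γ * (2 * (S : ℝ) - 1) * μmax + |1 - γ * μmin|)
    (hcond1 : γ * (2 * (S : ℝ) - 1) * μmax + |1 - γ * μmin| ≤ 1)
    (hcond2 : ∀ i : Fin d, 0 ≤ γ * colDot D X i i ∧ γ * colDot D X i i ≤ 1)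
    (c₁ c₂ : ℝ) (hc₁ : c₁ = l1 βstar)
    (hc₂ : c₂ = - Real.log (γ * (2 * (S : ℝ) - 1) * μmax + |1 - γ * μmin|))
    (k : ℕ) (hk : 1 ≤ k)
    (θk : ℝ) (hθk : θk = γ * μmax * c₁ * Real.exp (-c₂ * ((k : ℝ) - 2)))
    (β : Fin d → ℝ)
    (hsupp : ∀ i, β i ≠ 0 → βstar i ≠ 0)
    (hdist : l1 (β - βstar) ≤ c₁ * Real.exp (-c₂ * ((k : ℝ) - 2))) :
    (∀ i, softThresh θk (β - γ • (Dᵀ *ᵥ (X *ᵥ β - X *ᵥ βstar))) i ≠ 0 → βstar i ≠ 0)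
    ∧ l1 (softThresh θk (β - γ • (Dᵀ *ᵥ (X *ᵥ β - X *ᵥ βstar))) - βstar)
        ≤ c₁ * Real.exp (-c₂ * ((k : ℝ) - 1)) := by
  -- notation
  set δ : Fin d → ℝ := β - βstar with hδ
  set v : Fin d → ℝ := β - γ • (Dᵀ *ᵥ (X *ᵥ β - X *ᵥ βstar)) with hv
  have hvi : ∀ i, v i = β i - γ * ∑ j, colDot D X i j * δ j := by
    intro i
    simp only [hv, Pi.sub_apply, Pi.smul_apply, smul_eq_mul, mv_comp]
    rfl
  have hδsupp : ∀ j, βstar j = 0 → δ j = 0 := by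
    intro j hj
    have hb : β j = 0 := by by_contra h; exact (hsupp j h) hj
    simp [hδ, hb, hj]
  -- basic positivity
  have hE : (0:ℝ) < Real.exp (-c₂ * ((k : ℝ) - 2)) := Real.exp_pos _
  have hc₁0 : 0 ≤ c₁ := by rw [hc₁]; exact Finset.sum_nonneg fun i _ => abs_nonneg _
  have hμmax0 : 0 ≤ μmax := by
    rw [hμmax]; exact Real.iSup_nonneg fun p => abs_nonneg _
  have hθk0 : 0 ≤ θk := by
    rw [hθk]
    exact mul_nonneg (mul_nonneg (mul_nonneg hγ.le hμmax0) hc₁0) hE.le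
  have hL0 : 0 ≤ l1 δ := Finset.sum_nonneg fun i _ => abs_nonneg _
  have hμmax_le : ∀ i j : Fin d, i ≠ j → |colDot D X i j| ≤ μmax := by
    intro i j hij
    rw [hμmax]
    exact le_ciSup (f := fun p : {p : Fin d × Fin d // p.1 ≠ p.2} => |colDot D X p.val.1 p.val.2|)
      (Set.Finite.bddAbove (Set.finite_range _)) ⟨(i, j), hij⟩
  -- |v i| ≤ θk off the support
  have hkey_off : ∀ i, βstar i = 0 → |v i| ≤ θk := by
    intro i hi
    have hb : β i = 0 := by by_contra h; exact (hsupp i h) hi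
    have : |v i| ≤ γ * ∑ j, μmax * |δ j| := by
      rw [hvi i, hb, zero_sub, abs_neg, abs_mul, abs_of_pos hγ]
      refine mul_le_mul_of_nonneg_left ?_ hγ.le
      refine (Finset.abs_sum_le_sum_abs _ _).trans (Finset.sum_le_sum fun j _ => ?_)
      rcases eq_or_ne i j with rfl | hij
      · rw [hδsupp i hi]; simp
      · rw [abs_mul]
        exact mul_le_mul_of_nonneg_right (hμmax_le i j hij) (abs_nonneg _)
    rw [← Finset.mul_sum] at this
    calc |v i| ≤ γ * (μmax * l1 δ) := this
      _ ≤ γ * (μmax * (c₁ * Real.exp (-c₂ * ((k : ℝ) - 2)))) := by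
          refine mul_le_mul_of_nonneg_left (mul_le_mul_of_nonneg_left hdist hμmax0) hγ.le
      _ = θk := by rw [hθk]; ring
  have hout_off : ∀ i, βstar i = 0 → softThresh θk v i = 0 := by
    intro i hi
    exact soft_zero hθk0 (hkey_off i hi)
  refine ⟨fun i h => by by_contra hi; exact h (hout_off i hi), ?_⟩
  -- trivial case: βstar = 0
  by_cases hS0 : ∀ i, βstar i = 0
  · have hz : ∀ i, softThresh θk v i - βstar i = 0 := by
      intro i; rw [hout_off i (hS0 i), hS0 i, sub_zero]
    have : l1 (softThresh θk v - βstar) = 0 := by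
      refine Finset.sum_eq_zero fun i _ => ?_
      rw [Pi.sub_apply, hz i, abs_zero]
    rw [this]
    positivity
  -- main case
  push_neg at hS0
  set A : ℝ := γ * (2 * (S : ℝ) - 1) * μmax + |1 - γ * μmin| with hA
  set Sf : Finset (Fin d) := Finset.univ.filter (fun i => βstar i ≠ 0) with hSf
  have hSfmem : ∀ i, i ∈ Sf ↔ βstar i ≠ 0 := by
    intro i; simp [hSf]
  have hSfne : Sf.Nonempty := by
    obtain ⟨i, hi⟩ := hS0
    exact ⟨i, (hSfmem i).mpr hi⟩
  have hn1 : 1 ≤ Sf.card := Finset.card_pos.mpr hSfne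
  have hnS : Sf.card ≤ S := by
    have : {i : Fin d | βstar i ≠ 0} = ↑Sf := by ext i; simp [hSf]
    rw [this, Set.ncard_coe_finset] at hcard
    exact hcard
  -- μmin bound
  have hμmin_le : ∀ i : Fin d, βstar i ≠ 0 → μmin ≤ colDot D X i i := by
    intro i hi
    have h1 : μmin ≤ |colDot D X i i| := by
      rw [hμmin]
      exact ciInf_le (Set.Finite.bddBelow (Set.finite_range _)) (⟨i, hi⟩ : {i : Fin d // βstar i ≠ 0})
    have h2 : 0 ≤ colDot D X i i := nonneg_of_mul_nonneg_right (hcond2 i).1 hγ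
    rwa [abs_of_nonneg h2] at h1
  have habs_le : ∀ i : Fin d, βstar i ≠ 0 → |1 - γ * colDot D X i i| ≤ |1 - γ * μmin| := by
    intro i hi
    have h1 := (hcond2 i).1
    have h2 := (hcond2 i).2
    have h3 : γ * μmin ≤ γ * colDot D X i i :=
      mul_le_mul_of_nonneg_left (hμmin_le i hi) hγ.le
    rw [abs_of_nonneg (by linarith)]
    calc 1 - γ * colDot D X i i ≤ 1 - γ * μmin := by linarith
      _ ≤ |1 - γ * μmin| := le_abs_self _
  -- per-coordinate bound on the support
  have hL : l1 δ ≤ c₁ * Real.exp (-c₂ * ((k : ℝ) - 2)) := hdist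
  have hkey_on : ∀ i, βstar i ≠ 0 →
      |v i - βstar i| ≤ |1 - γ * μmin| * |δ i| + γ * μmax * (l1 δ - |δ i|) := by
    intro i hi
    have hsplit : v i - βstar i
        = (1 - γ * colDot D X i i) * δ i - γ * ∑ j ∈ Finset.univ.erase i, colDot D X i j * δ j := by
      rw [hvi i]
      have : (∑ j, colDot D X i j * δ j)
          = colDot D X i i * δ i + ∑ j ∈ Finset.univ.erase i, colDot D X i j * δ j := by
        rw [← Finset.add_sum_erase _ _ (Finset.mem_univ i)]
      rw [this]
      have : β i - βstar i = δ i := rfl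
      ring_nf
      simp only [hδ, Pi.sub_apply]
      ring
    rw [hsplit]
    calc |(1 - γ * colDot D X i i) * δ i - γ * ∑ j ∈ Finset.univ.erase i, colDot D X i j * δ j|
        ≤ |(1 - γ * colDot D X i i) * δ i| + |γ * ∑ j ∈ Finset.univ.erase i, colDot D X i j * δ j| :=
          abs_sub _ _
      _ ≤ |1 - γ * μmin| * |δ i| + γ * μmax * (l1 δ - |δ i|) := by
          gcongr ?_ + ?_
          · rw [abs_mul]
            exact mul_le_mul_of_nonneg_right (habs_le i hi) (abs_nonneg _)
          · rw [abs_mul, abs_of_pos hγ, mul_assoc]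
            refine mul_le_mul_of_nonneg_left ?_ hγ.le
            calc |∑ j ∈ Finset.univ.erase i, colDot D X i j * δ j|
                ≤ ∑ j ∈ Finset.univ.erase i, |colDot D X i j * δ j| :=
                  Finset.abs_sum_le_sum_abs _ _
              _ ≤ ∑ j ∈ Finset.univ.erase i, μmax * |δ j| := by
                  refine Finset.sum_le_sum fun j hj => ?_
                  rw [abs_mul]
                  exact mul_le_mul_of_nonneg_right
                    (hμmax_le i j (Ne.symm (Finset.ne_of_mem_erase hj))) (abs_nonneg _)
              _ = μmax * (l1 δ - |δ i|) := by
                  rw [← Finset.mul_sum]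
                  congr 1
                  rw [Finset.sum_erase_eq_sub (Finset.mem_univ i)]
                  rfl
  -- sum up
  have hsum1 : l1 (softThresh θk v - βstar) = ∑ i ∈ Sf, |softThresh θk v i - βstar i| := by
    rw [l1]
    refine (Finset.sum_subset (Finset.subset_univ Sf) fun i _ hi => ?_).symm
    have hbi : βstar i = 0 := by by_contra h; exact hi ((hSfmem i).mpr h)
    rw [Pi.sub_apply, hout_off i hbi, hbi, sub_zero, abs_zero]
  have hsum2 : ∑ i ∈ Sf, |δ i| = l1 δ := by
    refine Finset.sum_subset (Finset.subset_univ Sf) fun i _ hi => ?_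
    have hbi : βstar i = 0 := by by_contra h; exact hi ((hSfmem i).mpr h)
    rw [hδsupp i hbi, abs_zero]
  have hstep : l1 (softThresh θk v - βstar)
      ≤ ∑ i ∈ Sf, (|1 - γ * μmin| * |δ i| + γ * μmax * (l1 δ - |δ i|) + θk) := by
    rw [hsum1]
    refine Finset.sum_le_sum fun i hi => ?_
    have hbi : βstar i ≠ 0 := (hSfmem i).mp hi
    calc |softThresh θk v i - βstar i|
        ≤ |softThresh θk v i - v i| + |v i - βstar i| := abs_sub_le _ _ _
      _ ≤ θk + |v i - βstar i| := by gcongr; exact soft_dist hθk0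
      _ ≤ |1 - γ * μmin| * |δ i| + γ * μmax * (l1 δ - |δ i|) + θk := by
          have := hkey_on i hbi; linarith
  have hsum3 : ∑ i ∈ Sf, (|1 - γ * μmin| * |δ i| + γ * μmax * (l1 δ - |δ i|) + θk)
      = |1 - γ * μmin| * l1 δ + γ * μmax * ((Sf.card : ℝ) * l1 δ - l1 δ) + (Sf.card : ℝ) * θk := by
    rw [Finset.sum_add_distrib, Finset.sum_add_distrib, ← Finset.mul_sum, hsum2,
      ← Finset.mul_sum, Finset.sum_sub_distrib, Finset.sum_const, hsum2,
      Finset.sum_const, nsmul_eq_mul, nsmul_eq_mul]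
  -- final arithmetic
  have hexp : Real.exp (-c₂ * ((k : ℝ) - 1)) = A * Real.exp (-c₂ * ((k : ℝ) - 2)) := by
    rw [show -c₂ * ((k : ℝ) - 1) = -c₂ + -c₂ * ((k : ℝ) - 2) by ring, Real.exp_add, hc₂]
    simp only [neg_neg]
    rw [Real.exp_log hcond0]
  rw [hexp]
  have hfinal : |1 - γ * μmin| * l1 δ + γ * μmax * ((Sf.card : ℝ) * l1 δ - l1 δ)
      + (Sf.card : ℝ) * θk ≤ c₁ * (A * Real.exp (-c₂ * ((k : ℝ) - 2))) := by
    have hn1' : (1:ℝ) ≤ (Sf.card:ℝ) := by exact_mod_cast hn1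
    have hnS' : (Sf.card:ℝ) ≤ (S:ℝ) := by exact_mod_cast hnS
    set E := Real.exp (-c₂ * ((k : ℝ) - 2)) with hEdef
    set n := (Sf.card : ℝ) with hndef
    have habs0 : 0 ≤ |1 - γ * μmin| := abs_nonneg _
    have hgm : 0 ≤ γ * μmax := mul_nonneg hγ.le hμmax0
    have hcE : 0 ≤ c₁ * E := mul_nonneg hc₁0 hE.le
    rw [hθk, hA]
    nlinarith [mul_le_mul_of_nonneg_left hL habs0, mul_le_mul_of_nonneg_left hL hgm,
      mul_nonneg hgm (sub_nonneg.mpr hL), mul_nonneg (mul_nonneg hgm (sub_nonneg.mpr hn1')) (sub_nonneg.mpr hL),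
      mul_nonneg (mul_nonneg hgm (sub_nonneg.mpr hnS')) hcE]
  calc l1 (softThresh θk v - βstar)
      ≤ ∑ i ∈ Sf, (|1 - γ * μmin| * |δ i| + γ * μmax * (l1 δ - |δ i|) + θk) := hstep
    _ = _ := hsum3
    _ ≤ c₁ * (A * Real.exp (-c₂ * ((k : ℝ) - 2))) := hfinal
end

section
/- Let X, D ∈ ℝ^{N×d}, let β* ∈ ℝ^d with supp(β*) ⊆ 𝕊 ⊆ {1,…,d}, let y = Xβ*, and let γ > 0. Define μ_max = max_{i≠j} |D_{:,i}^⊤ X_{:,j}|. Let β ∈ ℝ^d satisfy supp(β) ⊆ 𝕊, and let θ ≥ γ μ_max ‖β − β*‖₁. Then the updated vector β⁺ = S_θ( β − γ D^⊤ (X β − y) ) satisfies supp(β⁺) ⊆ 𝕊. -/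
open Matrix

/-- Let X, D ∈ ℝ^{N×d}, supp(β*) ⊆ 𝕊, y = Xβ*, γ > 0,
μ_max = max_{i≠j}|D_{:,i}^⊤X_{:,j}|.  If supp(β) ⊆ 𝕊 and θ ≥ γ μ_max ‖β − β*‖₁, then
β⁺ = S_θ(β − γD^⊤(Xβ − y)) satisfies supp(β⁺) ⊆ 𝕊. -/
theorem stmt_4 (N d : ℕ) (X D : Matrix (Fin N) (Fin d) ℝ)
    (𝕊 : Finset (Fin d)) (βstar : Fin d → ℝ)
    (hβstar : ∀ i, βstar i ≠ 0 → i ∈ 𝕊)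
    (γ : ℝ) (hγ : 0 < γ)
    (μmax : ℝ)
    (hμmax : μmax = ⨆ p : {p : Fin d × Fin d // p.1 ≠ p.2}, |colDot D X p.val.1 p.val.2|)
    (β : Fin d → ℝ) (hβ : ∀ i, β i ≠ 0 → i ∈ 𝕊)
    (θ : ℝ) (hθ : γ * μmax * l1 (β - βstar) ≤ θ) :
    ∀ i, softThresh θ (β - γ • (Dᵀ *ᵥ (X *ᵥ β - X *ᵥ βstar))) i ≠ 0 → i ∈ 𝕊 := by
  intro i hi
  by_contra hS
  apply hi
  have hβi : β i = 0 := by by_contra h; exact hS (hβ i h)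
  -- compute the i-th coordinate
  have hw : (β - γ • (Dᵀ *ᵥ (X *ᵥ β - X *ᵥ βstar))) i
      = -(γ * ∑ j, colDot D X i j * (β j - βstar j)) := by
    have hswap : (∑ k, D k i * ∑ j, X k j * (β j - βstar j))
        = ∑ j, colDot D X i j * (β j - βstar j) := by
      simp only [Finset.mul_sum, colDot, Finset.sum_mul]
      rw [Finset.sum_comm]
      apply Finset.sum_congr rfl; intro j _
      apply Finset.sum_congr rfl; intro k _
      ring
    simp only [Pi.sub_apply, Pi.smul_apply, smul_eq_mul, mulVec, dotProduct,
      transpose_apply, hβi, zero_sub, neg_inj]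
    rw [← hswap]
    congr 1
    apply Finset.sum_congr rfl; intro k _
    rw [Finset.mul_sum, ← Finset.sum_sub_distrib, Finset.mul_sum]
    apply Finset.sum_congr rfl; intro j _
    ring
  -- bound each |colDot| by μmax on the support terms
  have hbdd : BddAbove (Set.range fun p : {p : Fin d × Fin d // p.1 ≠ p.2} =>
      |colDot D X p.val.1 p.val.2|) := (Set.finite_range _).bddAbove
  have hterm : ∀ j, |colDot D X i j * (β j - βstar j)| ≤ μmax * |β j - βstar j| := by
    intro j
    rcases eq_or_ne (β j - βstar j) 0 with h0 | h0
    · simp [h0]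
    · have hji : i ≠ j := by
        intro h; subst h
        have : βstar i = 0 := by by_contra h'; exact hS (hβstar i h')
        simp [hβi, this] at h0
      have hle : |colDot D X i j| ≤ μmax := by
        rw [hμmax]
        exact le_ciSup hbdd ⟨(i, j), hji⟩
      rw [abs_mul]
      exact mul_le_mul_of_nonneg_right hle (abs_nonneg _)
  have hsum : |∑ j, colDot D X i j * (β j - βstar j)| ≤ μmax * l1 (β - βstar) := by
    calc |∑ j, colDot D X i j * (β j - βstar j)|
        ≤ ∑ j, |colDot D X i j * (β j - βstar j)| := Finset.abs_sum_le_sum_abs _ _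
      _ ≤ ∑ j, μmax * |β j - βstar j| := Finset.sum_le_sum fun j _ => hterm j
      _ = μmax * l1 (β - βstar) := by
          rw [l1, Finset.mul_sum]; simp [Pi.sub_apply]
  have habs : |(β - γ • (Dᵀ *ᵥ (X *ᵥ β - X *ᵥ βstar))) i| ≤ θ := by
    rw [hw, abs_neg, abs_mul, abs_of_pos hγ]
    calc γ * |∑ j, colDot D X i j * (β j - βstar j)|
        ≤ γ * (μmax * l1 (β - βstar)) :=
          mul_le_mul_of_nonneg_left hsum hγ.le
      _ = γ * μmax * l1 (β - βstar) := by ring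
      _ ≤ θ := hθ
  simp only [softThresh]
  rw [max_eq_left (by linarith)]
  ring
end

section
/- Let X ∈ ℝ^{N×d} be a fixed matrix, n ≤ N, σ > 0, and D_n = (2/((2n+1)σ²)) X_{1:n} ∈ ℝ^{n×d}. Let β* ∈ ℝ^d be S-sparse with support 𝕊, y = Xβ*, and let δ ∈ (0,1), c > 0, K ≥ 1. Assume: (i) min_{i∈𝕊} (D_n)_{:,i}^⊤ (X_{1:n})_{:,i} ≥ (n/(n+2))·(1 − √((log S − log δ)/(n c))); (ii) max_{i∈{1,…,d}} (D_n)_{:,i}^⊤ (X_{1:n})_{:,i} ≤ (n/(n+2))·(1 + √((log S − log δ)/(n c))); (iii) max_{i≠j} |(D_n)_{:,i}^⊤ (X_{1:n})_{:,j}| ≤ √((log d − log δ)/(n c)); (iv) n ≥ N₀ = 8(4S−2)²·(log d + log S − log δ)/c; (v) γ > 0 and γ · max_{i∈{1,…,d}} (D_n)_{:,i}^⊤ (X_{1:n})_{:,i} ≤ 1; (vi) (n/(n+2))·(1 − √((log S − log δ)/(n c))) ≥ 2/3. Then there exist thresholds θ^{(1)},…,θ^{(K)} ≥ 0 such that the LISTA-VM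 iterates with M = (2/σ²) I_d satisfy ‖β^{(K+1)}_{2n+1} − β*‖₂ ≤ ‖β*‖₁ · e^{−α_n K}, where α_n = −log( 1 − (2/3)γ + γ(2S−1)√((log d − log δ)/(n c)) + γ√((log S − log δ)/(n c)) ). -/
open Matrix

/-- Euclidean norm on ℝ^d. -/
noncomputable def l2 {d : ℕ} (v : Fin d → ℝ) : ℝ := Real.sqrt (∑ i, (v i) ^ 2)

/-- The submatrix X_{1:n} consisting of the first n rows of X. -/
def prefixRows {N d : ℕ} (X : Matrix (Fin N) (Fin d) ℝ) {n : ℕ} (hn : n ≤ N) :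
    Matrix (Fin n) (Fin d) ℝ := fun i j => X (Fin.castLE hn i) j

/-- LISTA-VM iterates with prefix length n: `listaVM X βstar M γ θ hn k` is β^{(k+1)}_{2n+1},
so that β^{(1)}_{2n+1} = 0 and
β^{(k+1)}_{2n+1} = S_{θ^{(k)}}( β^{(k)}_{2n+1} − (γ/(2n+1)) M X_{1:n}^⊤ (X_{1:n} β^{(k)}_{2n+1} − y_{1:n}) )
with y = Xβ*. -/
noncomputable def listaVM {N d : ℕ} (X : Matrix (Fin N) (Fin d) ℝ) (βstar : Fin d → ℝ)
    (M : Matrix (Fin d) (Fin d) ℝ) (γ : ℝ) (θ : ℕ → ℝ) {n : ℕ} (hn : n ≤ N) :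
    ℕ → (Fin d → ℝ)
  | 0 => 0
  | (k + 1) => softThresh (θ (k + 1))
      (listaVM X βstar M γ θ hn k -
        (γ / (2 * (n : ℝ) + 1)) •
          (M *ᵥ ((prefixRows X hn)ᵀ *ᵥ
            (prefixRows X hn *ᵥ listaVM X βstar M γ θ hn k -
              prefixRows X hn *ᵥ βstar))))


lemma soft_close (θ x : ℝ) (hθ : 0 ≤ θ) : |Real.sign x * max 0 (|x| - θ) - x| ≤ θ := by
  rcases le_or_gt (|x|) θ with h | h
  · rw [max_eq_left (by linarith), mul_zero, zero_sub, abs_neg]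
    exact h
  · rw [max_eq_right (by linarith : (0:ℝ) ≤ |x| - θ)]
    rcases lt_trichotomy x 0 with hx | hx | hx
    · rw [Real.sign_of_neg hx, abs_of_neg hx,
        show (-1 : ℝ) * (-x - θ) - x = θ by ring, abs_of_nonneg hθ]
    · subst hx; simp at h; linarith
    · rw [Real.sign_of_pos hx, abs_of_pos hx,
        show (1 : ℝ) * (x - θ) - x = -θ by ring, abs_neg, abs_of_nonneg hθ]

lemma soft_sub_le (θ x b : ℝ) (hθ : 0 ≤ θ) :
    |Real.sign x * max 0 (|x| - θ) - b| ≤ |x - b| + θ := by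
  calc |Real.sign x * max 0 (|x| - θ) - b|
      ≤ |Real.sign x * max 0 (|x| - θ) - x| + |x - b| := abs_sub_le _ _ _
    _ ≤ θ + |x - b| := by linarith [soft_close θ x hθ]
    _ = |x - b| + θ := by ring

lemma soft_eq_zero {θ x : ℝ} (h : |x| ≤ θ) : Real.sign x * max 0 (|x| - θ) = 0 := by
  rw [max_eq_left (by linarith), mul_zero]

lemma softThresh_zero {d : ℕ} (θ : ℝ) : softThresh θ (0 : Fin d → ℝ) = 0 := by
  funext i
  simp [softThresh, Real.sign_zero]

lemma l1_nonneg {d : ℕ} (v : Fin d → ℝ) : 0 ≤ l1 v :=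
  Finset.sum_nonneg fun i _ => abs_nonneg _

lemma l2_le_l1 {d : ℕ} (v : Fin d → ℝ) : l2 v ≤ l1 v := by
  have h1 : ∑ i, (v i) ^ 2 ≤ (l1 v) ^ 2 := by
    have : ∀ i ∈ Finset.univ, (v i) ^ 2 ≤ |v i| * l1 v := by
      intro i _
      rw [← sq_abs]
      have hle : |v i| ≤ l1 v := Finset.single_le_sum (fun j _ => abs_nonneg (v j)) (Finset.mem_univ i)
      nlinarith [abs_nonneg (v i)]
    calc ∑ i, (v i) ^ 2 ≤ ∑ i, |v i| * l1 v := Finset.sum_le_sum this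
      _ = (l1 v) ^ 2 := by rw [← Finset.sum_mul]; rw [l1]; ring
  calc l2 v = Real.sqrt (∑ i, (v i) ^ 2) := rfl
    _ ≤ Real.sqrt ((l1 v) ^ 2) := Real.sqrt_le_sqrt h1
    _ = l1 v := Real.sqrt_sq (l1_nonneg v)

lemma step_bound {d : ℕ} (G : Matrix (Fin d) (Fin d) ℝ) (βstar β : Fin d → ℝ)
    (T : Finset (Fin d)) (hT : ∀ i, i ∈ T ↔ βstar i ≠ 0)
    (γ μ : ℝ) (hγ : 0 ≤ γ) (hμ : 0 ≤ μ)
    (hdiag : ∀ i ∈ T, (2:ℝ)/3 ≤ G i i)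
    (hdiag' : ∀ i, γ * G i i ≤ 1)
    (hoff : ∀ i j, i ≠ j → |G i j| ≤ μ)
    (hsupp : ∀ i, βstar i = 0 → β i = 0) :
    (∀ i, βstar i = 0 →
      softThresh (γ * μ * l1 (β - βstar)) (β - γ • (G *ᵥ (β - βstar))) i = 0) ∧
    l1 (softThresh (γ * μ * l1 (β - βstar)) (β - γ • (G *ᵥ (β - βstar))) - βstar)
      ≤ (1 - (2/3) * γ + γ * μ * (2 * (T.card : ℝ) - 1)) * l1 (β - βstar) := by
  set e : Fin d → ℝ := β - βstar with he
  set E : ℝ := l1 e with hE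
  set θ : ℝ := γ * μ * E with hθdef
  have hE0 : 0 ≤ E := l1_nonneg e
  have hθ0 : 0 ≤ θ := mul_nonneg (mul_nonneg hγ hμ) hE0
  have hesupp : ∀ j, j ∉ T → e j = 0 := by
    intro j hj
    have hb : βstar j = 0 := by
      by_contra hne; exact hj ((hT j).2 hne)
    simp [he, hsupp j hb, hb]
  have hET : ∑ i ∈ T, |e i| = E := by
    rw [hE, l1]
    exact Finset.sum_subset (Finset.subset_univ T)
      (fun x _ hx => by rw [hesupp x hx, abs_zero])
  set s : Fin d → ℝ := softThresh θ (β - γ • (G *ᵥ e)) with hs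
  have hmv : ∀ i, (β - γ • (G *ᵥ e)) i = β i - γ * ∑ j, G i j * e j := by
    intro i
    simp [Matrix.mulVec, dotProduct]
  -- part (a)
  have ha : ∀ i, βstar i = 0 → s i = 0 := by
    intro i hi0
    have hiT : i ∉ T := fun h => (hT i).1 h hi0
    have hsum : ∑ j, G i j * e j = ∑ j ∈ T, G i j * e j :=
      (Finset.sum_subset (Finset.subset_univ T)
        (fun x _ hx => by rw [hesupp x hx, mul_zero])).symm
    have hbound : |∑ j, G i j * e j| ≤ μ * E := by
      rw [hsum]
      calc |∑ j ∈ T, G i j * e j| ≤ ∑ j ∈ T, |G i j * e j| :=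
            Finset.abs_sum_le_sum_abs _ _
        _ ≤ ∑ j ∈ T, μ * |e j| := by
            refine Finset.sum_le_sum fun j hj => ?_
            rw [abs_mul]
            exact mul_le_mul_of_nonneg_right
              (hoff i j (fun h => hiT (h ▸ hj))) (abs_nonneg _)
        _ = μ * E := by rw [← Finset.mul_sum, hET]
    have harg : |(β - γ • (G *ᵥ e)) i| ≤ θ := by
      rw [hmv i, hsupp i hi0, zero_sub, abs_neg, abs_mul, abs_of_nonneg hγ, hθdef,
        mul_assoc]
      exact mul_le_mul_of_nonneg_left hbound hγ
    exact soft_eq_zero harg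
  refine ⟨ha, ?_⟩
  -- part (b)
  have hsz : ∀ i, i ∉ T → |s i - βstar i| = 0 := by
    intro i hiT
    have hb : βstar i = 0 := by
      by_contra hne; exact hiT ((hT i).2 hne)
    rw [hb, ha i hb, sub_zero, abs_zero]
  have hper : ∀ i ∈ T, |s i - βstar i|
      ≤ (1 - (2/3) * γ) * |e i| + γ * (μ * (E - |e i|)) + γ * μ * E := by
    intro i hiT
    have h1 : |s i - βstar i| ≤ |(β - γ • (G *ᵥ e)) i - βstar i| + θ :=
      soft_sub_le θ _ _ hθ0
    have hsplit : ∑ j, G i j * e j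
        = G i i * e i + ∑ j ∈ Finset.univ.erase i, G i j * e j :=
      (Finset.add_sum_erase _ _ (Finset.mem_univ i)).symm
    have hdecomp : (β - γ • (G *ᵥ e)) i - βstar i
        = (1 - γ * G i i) * e i - γ * ∑ j ∈ Finset.univ.erase i, G i j * e j := by
      rw [hmv i, hsplit]
      simp only [he, Pi.sub_apply]
      ring
    have hR : |∑ j ∈ Finset.univ.erase i, G i j * e j| ≤ μ * (E - |e i|) := by
      calc |∑ j ∈ Finset.univ.erase i, G i j * e j|
          ≤ ∑ j ∈ Finset.univ.erase i, |G i j * e j| := Finset.abs_sum_le_sum_abs _ _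
        _ ≤ ∑ j ∈ Finset.univ.erase i, μ * |e j| := by
            refine Finset.sum_le_sum fun j hj => ?_
            rw [abs_mul]
            exact mul_le_mul_of_nonneg_right
              (hoff i j (Ne.symm (Finset.mem_erase.mp hj).1)) (abs_nonneg _)
        _ = μ * (E - |e i|) := by
            rw [← Finset.mul_sum, Finset.sum_erase_eq_sub (Finset.mem_univ i)]
            rw [hE, l1]
    have h2 : |(β - γ • (G *ᵥ e)) i - βstar i|
        ≤ (1 - γ * G i i) * |e i| + γ * (μ * (E - |e i|)) := by
      rw [hdecomp]
      calc |(1 - γ * G i i) * e i - γ * ∑ j ∈ Finset.univ.erase i, G i j * e j|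
          ≤ |(1 - γ * G i i) * e i| + |γ * ∑ j ∈ Finset.univ.erase i, G i j * e j| :=
            abs_sub _ _
        _ ≤ (1 - γ * G i i) * |e i| + γ * (μ * (E - |e i|)) := by
            rw [abs_mul, abs_mul, abs_of_nonneg hγ,
              abs_of_nonneg (by linarith [hdiag' i] : (0:ℝ) ≤ 1 - γ * G i i)]
            exact add_le_add le_rfl (mul_le_mul_of_nonneg_left hR hγ)
    have h3 : (1 - γ * G i i) * |e i| ≤ (1 - (2/3) * γ) * |e i| := by
      have h23 := hdiag i hiT
      nlinarith [mul_nonneg (mul_nonneg hγ (by linarith : (0:ℝ) ≤ G i i - 2/3))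
        (abs_nonneg (e i))]
    calc |s i - βstar i| ≤ |(β - γ • (G *ᵥ e)) i - βstar i| + θ := h1
      _ ≤ (1 - γ * G i i) * |e i| + γ * (μ * (E - |e i|)) + θ := by linarith
      _ ≤ (1 - (2/3) * γ) * |e i| + γ * (μ * (E - |e i|)) + γ * μ * E := by
          rw [hθdef]; linarith
  have hl1 : l1 (s - βstar) = ∑ i ∈ T, |s i - βstar i| := by
    rw [l1]
    exact (Finset.sum_subset (Finset.subset_univ T)
      (fun x _ hx => by
        have := hsz x hx; simpa using this)).symm
  calc l1 (s - βstar) = ∑ i ∈ T, |s i - βstar i| := hl1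
    _ ≤ ∑ i ∈ T, ((1 - (2/3) * γ) * |e i| + γ * (μ * (E - |e i|)) + γ * μ * E) :=
        Finset.sum_le_sum hper
    _ = (1 - (2/3) * γ + γ * μ * (2 * (T.card : ℝ) - 1)) * E := by
        rw [Finset.sum_add_distrib, Finset.sum_add_distrib, ← Finset.mul_sum, hET,
          Finset.sum_const, nsmul_eq_mul]
        have : ∑ i ∈ T, γ * (μ * (E - |e i|)) = γ * μ * ((T.card : ℝ) * E - E) := by
          rw [← Finset.mul_sum, ← Finset.mul_sum, Finset.sum_sub_distrib,
            Finset.sum_const, nsmul_eq_mul, hET, mul_assoc]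
        rw [this]; ring

set_option maxHeartbeats 1600000 in
lemma stmt_7_main (N d S n K : ℕ) (hK : 1 ≤ K) (hn : n ≤ N) (σ : ℝ) (hσ : 0 < σ)
    (X : Matrix (Fin N) (Fin d) ℝ) (βstar : Fin d → ℝ)
    (hsparse : Set.ncard {i : Fin d | βstar i ≠ 0} ≤ S)
    (δ c γ : ℝ) (hδ0 : 0 < δ) (hδ1 : δ < 1) (hc : 0 < c) (hγ : 0 < γ)
    (Dn : Matrix (Fin n) (Fin d) ℝ)
    (hDn : Dn = (2 / ((2 * (n : ℝ) + 1) * σ ^ 2)) • prefixRows X hn)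
    (hi : ∀ i : Fin d, βstar i ≠ 0 →
      ((n : ℝ) / ((n : ℝ) + 2))
          * (1 - Real.sqrt ((Real.log S - Real.log δ) / ((n : ℝ) * c)))
        ≤ colDot Dn (prefixRows X hn) i i)
    (hii : ∀ i : Fin d,
      colDot Dn (prefixRows X hn) i i
        ≤ ((n : ℝ) / ((n : ℝ) + 2))
            * (1 + Real.sqrt ((Real.log S - Real.log δ) / ((n : ℝ) * c))))
    (hiii : ∀ i j : Fin d, i ≠ j →
      |colDot Dn (prefixRows X hn) i j|
        ≤ Real.sqrt ((Real.log d - Real.log δ) / ((n : ℝ) * c)))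
    (hiv : 8 * (4 * (S : ℝ) - 2) ^ 2 * (Real.log d + Real.log S - Real.log δ) / c
        ≤ (n : ℝ))
    (hv : ∀ i : Fin d, γ * colDot Dn (prefixRows X hn) i i ≤ 1)
    (hvi : (2 : ℝ) / 3 ≤ ((n : ℝ) / ((n : ℝ) + 2))
        * (1 - Real.sqrt ((Real.log S - Real.log δ) / ((n : ℝ) * c))))
    (hβ0 : βstar ≠ 0) :
    ∃ θ : ℕ → ℝ, (∀ k, 0 ≤ θ k) ∧
      l2 (listaVM X βstar ((2 / σ ^ 2) • (1 : Matrix (Fin d) (Fin d) ℝ)) γ θ hn K - βstar)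
        ≤ l1 βstar * Real.exp
            (-(- Real.log (1 - (2 / 3) * γ
                + γ * (2 * (S : ℝ) - 1)
                    * Real.sqrt ((Real.log d - Real.log δ) / ((n : ℝ) * c))
                + γ * Real.sqrt ((Real.log S - Real.log δ) / ((n : ℝ) * c))))
              * (K : ℝ)) := by
  classical
set μ := Real.sqrt ((Real.log d - Real.log δ) / ((n : ℝ) * c)) with hμdef
set sB := Real.sqrt ((Real.log S - Real.log δ) / ((n : ℝ) * c)) with hsBdef
set ρ := 1 - (2 / 3) * γ + γ * (2 * (S : ℝ) - 1) * μ + γ * sB with hρdef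
set Gm : Matrix (Fin d) (Fin d) ℝ :=
  (fun i j => colDot Dn (prefixRows X hn) i j) with hGmdef
set T : Finset (Fin d) := Finset.univ.filter (fun i => βstar i ≠ 0) with hTdef
have hTmem : ∀ i, i ∈ T ↔ βstar i ≠ 0 := by
  intro i; simp [hTdef]
have hcardS : T.card ≤ S := by
  have hset : {i : Fin d | βstar i ≠ 0} = ↑T := by
    ext i; simp [hTdef]
  rwa [hset, Set.ncard_coe_finset] at hsparse
have hTne : T.Nonempty := by
  obtain ⟨i, hi'⟩ := Function.ne_iff.mp hβ0
  exact ⟨i, (hTmem i).2 (by simpa using hi')⟩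
obtain ⟨i0, hi0T⟩ := hTne
have hS1 : (1 : ℝ) ≤ S := by
  have h1 : 1 ≤ T.card := Finset.card_pos.mpr ⟨i0, hi0T⟩
  exact_mod_cast le_trans h1 hcardS
have hd1 : (1 : ℝ) ≤ d := by exact_mod_cast i0.pos
have hlogδ : Real.log δ < 0 := Real.log_neg hδ0 hδ1
have hlogS : 0 ≤ Real.log S := Real.log_nonneg hS1
have hlogd : 0 ≤ Real.log d := Real.log_nonneg hd1
have hn0 : (0 : ℝ) < n := by
  have h42 : (0 : ℝ) < (4 * (S : ℝ) - 2) ^ 2 := pow_pos (by linarith) 2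
  have hnum : 0 < 8 * (4 * (S : ℝ) - 2) ^ 2
      * (Real.log d + Real.log S - Real.log δ) := by nlinarith
  have hdp := div_pos hnum hc
  linarith
have hμ0 : 0 ≤ μ := Real.sqrt_nonneg _
have hsB0 : 0 < sB := Real.sqrt_pos.mpr (div_pos (by linarith) (mul_pos hn0 hc))
have hGdiag : ∀ i ∈ T, (2 : ℝ) / 3 ≤ Gm i i :=
  fun i hiT => le_trans hvi (hi i ((hTmem i).1 hiT))
have hGdiag' : ∀ i, γ * Gm i i ≤ 1 := fun i => hv i
have hGoff : ∀ i j, i ≠ j → |Gm i j| ≤ μ := fun i j h => hiii i j h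
have hγ1 : (2 / 3) * γ ≤ 1 := by
  have h1 := hv i0
  have h2 := hGdiag i0 hi0T
  nlinarith
have hρ0 : 0 < ρ := by
  have h1 : 0 ≤ γ * (2 * (S : ℝ) - 1) * μ :=
    mul_nonneg (mul_nonneg hγ.le (by linarith)) hμ0
  have h2 : 0 < γ * sB := mul_pos hγ hsB0
  rw [hρdef]; linarith
have hrρ : 1 - (2 / 3) * γ + γ * μ * (2 * (T.card : ℝ) - 1) ≤ ρ := by
  have hTS : (T.card : ℝ) ≤ S := by exact_mod_cast hcardS
  have h1 : γ * μ * (2 * (T.card : ℝ) - 1) ≤ γ * (2 * (S : ℝ) - 1) * μ := by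
    nlinarith [mul_nonneg (mul_nonneg hγ.le hμ0) (sub_nonneg.mpr hTS)]
  have h2 : 0 < γ * sB := mul_pos hγ hsB0
  rw [hρdef]; linarith
-- the matrix identity
have hGm : Gm = (2 / ((2 * (n : ℝ) + 1) * σ ^ 2))
    • ((prefixRows X hn)ᵀ * prefixRows X hn) := by
  ext i j
  simp only [hGmdef, colDot, hDn, Matrix.smul_apply, Matrix.mul_apply,
    Matrix.transpose_apply, Pi.smul_apply, smul_eq_mul]
  rw [Finset.mul_sum]
  exact Finset.sum_congr rfl fun k _ => by ring
have hupd : ∀ β : Fin d → ℝ,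
    β - (γ / (2 * (n : ℝ) + 1)) •
        (((2 / σ ^ 2) • (1 : Matrix (Fin d) (Fin d) ℝ)) *ᵥ
          ((prefixRows X hn)ᵀ *ᵥ
            (prefixRows X hn *ᵥ β - prefixRows X hn *ᵥ βstar)))
      = β - γ • (Gm *ᵥ (β - βstar)) := by
  intro β
  congr 1
  rw [← Matrix.mulVec_sub, hGm, Matrix.smul_mulVec, Matrix.one_mulVec,
    Matrix.smul_mulVec, ← Matrix.mulVec_mulVec, smul_smul, smul_smul]
  congr 1
  field_simp
-- the adaptive iterates
set bb : ℕ → (Fin d → ℝ) := fun k =>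
  Nat.rec 0 (fun _ b =>
    softThresh (γ * μ * l1 (b - βstar)) (b - γ • (Gm *ᵥ (b - βstar)))) k
  with hbbdef
set θseq : ℕ → ℝ := fun k =>
  Nat.rec 0 (fun k _ => γ * μ * l1 (bb k - βstar)) k with hθseqdef
have hbb0 : bb 0 = 0 := rfl
have hbbS : ∀ k, bb (k + 1)
    = softThresh (γ * μ * l1 (bb k - βstar))
        (bb k - γ • (Gm *ᵥ (bb k - βstar))) := fun k => rfl
have hθS : ∀ k, θseq (k + 1) = γ * μ * l1 (bb k - βstar) := fun k => rfl
have hlista : ∀ k, listaVM X βstar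
    ((2 / σ ^ 2) • (1 : Matrix (Fin d) (Fin d) ℝ)) γ θseq hn k = bb k := by
  intro k
  induction k with
  | zero => rfl
  | succ k ih =>
    show softThresh (θseq (k + 1)) _ = bb (k + 1)
    rw [hθS k, hbbS k]
    simp only [listaVM, ih]
    rw [hupd (bb k)]
have key : ∀ k, (∀ i, βstar i = 0 → bb k i = 0)
    ∧ l1 (bb k - βstar) ≤ ρ ^ k * l1 βstar := by
  intro k
  induction k with
  | zero =>
    refine ⟨fun i _ => rfl, ?_⟩
    rw [hbb0, pow_zero, one_mul]
    apply le_of_eq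
    simp [l1]
  | succ k ih =>
    obtain ⟨ihz, ihE⟩ := ih
    have hsb := step_bound Gm βstar (bb k) T hTmem γ μ hγ.le hμ0
      hGdiag hGdiag' hGoff ihz
    refine ⟨fun i h0 => by rw [hbbS k]; exact hsb.1 i h0, ?_⟩
    rw [hbbS k]
    calc l1 (softThresh (γ * μ * l1 (bb k - βstar))
          (bb k - γ • (Gm *ᵥ (bb k - βstar))) - βstar)
        ≤ (1 - (2/3) * γ + γ * μ * (2 * (T.card : ℝ) - 1)) * l1 (bb k - βstar) :=
          hsb.2
      _ ≤ ρ * l1 (bb k - βstar) :=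
          mul_le_mul_of_nonneg_right hrρ (l1_nonneg _)
      _ ≤ ρ * (ρ ^ k * l1 βstar) :=
          mul_le_mul_of_nonneg_left ihE hρ0.le
      _ = ρ ^ (k + 1) * l1 βstar := by ring
refine ⟨θseq, ?_, ?_⟩
· intro k
  cases k with
  | zero => exact le_refl 0
  | succ k =>
    rw [hθS k]
    exact mul_nonneg (mul_nonneg hγ.le hμ0) (l1_nonneg _)
· rw [hlista K]
  calc l2 (bb K - βstar) ≤ l1 (bb K - βstar) := l2_le_l1 _
    _ ≤ ρ ^ K * l1 βstar := (key K).2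
    _ = l1 βstar * Real.exp (-(-Real.log ρ) * (K : ℝ)) := by
        rw [neg_neg, mul_comm (Real.log ρ) ((K : ℝ)), Real.exp_nat_mul,
          Real.exp_log hρ0]
        ring

theorem stmt_7 (N d S n K : ℕ) (hK : 1 ≤ K) (hn : n ≤ N) (σ : ℝ) (hσ : 0 < σ)
    (X : Matrix (Fin N) (Fin d) ℝ) (βstar : Fin d → ℝ)
    (hsparse : Set.ncard {i : Fin d | βstar i ≠ 0} ≤ S)
    (δ c γ : ℝ) (hδ0 : 0 < δ) (hδ1 : δ < 1) (hc : 0 < c) (hγ : 0 < γ)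
    (Dn : Matrix (Fin n) (Fin d) ℝ)
    (hDn : Dn = (2 / ((2 * (n : ℝ) + 1) * σ ^ 2)) • prefixRows X hn)
    (hi : ∀ i : Fin d, βstar i ≠ 0 →
      ((n : ℝ) / ((n : ℝ) + 2))
          * (1 - Real.sqrt ((Real.log S - Real.log δ) / ((n : ℝ) * c)))
        ≤ colDot Dn (prefixRows X hn) i i)
    (hii : ∀ i : Fin d,
      colDot Dn (prefixRows X hn) i i
        ≤ ((n : ℝ) / ((n : ℝ) + 2))
            * (1 + Real.sqrt ((Real.log S - Real.log δ) / ((n : ℝ) * c))))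
    (hiii : ∀ i j : Fin d, i ≠ j →
      |colDot Dn (prefixRows X hn) i j|
        ≤ Real.sqrt ((Real.log d - Real.log δ) / ((n : ℝ) * c)))
    (hiv : 8 * (4 * (S : ℝ) - 2) ^ 2 * (Real.log d + Real.log S - Real.log δ) / c
        ≤ (n : ℝ))
    (hv : ∀ i : Fin d, γ * colDot Dn (prefixRows X hn) i i ≤ 1)
    (hvi : (2 : ℝ) / 3 ≤ ((n : ℝ) / ((n : ℝ) + 2))
        * (1 - Real.sqrt ((Real.log S - Real.log δ) / ((n : ℝ) * c)))) :
    ∃ θ : ℕ → ℝ, (∀ k, 0 ≤ θ k) ∧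
      l2 (listaVM X βstar ((2 / σ ^ 2) • (1 : Matrix (Fin d) (Fin d) ℝ)) γ θ hn K - βstar)
        ≤ l1 βstar * Real.exp
            (-(- Real.log (1 - (2 / 3) * γ
                + γ * (2 * (S : ℝ) - 1)
                    * Real.sqrt ((Real.log d - Real.log δ) / ((n : ℝ) * c))
                + γ * Real.sqrt ((Real.log S - Real.log δ) / ((n : ℝ) * c))))
              * (K : ℝ)) := by
  by_cases hβ0 : βstar = 0
  · refine ⟨fun _ => 0, fun _ => le_refl 0, ?_⟩
    subst hβ0
    have hz : ∀ k, listaVM X (0 : Fin d → ℝ)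
        ((2 / σ ^ 2) • (1 : Matrix (Fin d) (Fin d) ℝ)) γ (fun _ => 0) hn k = 0 := by
      intro k
      induction k with
      | zero => rfl
      | succ k ih =>
        simp [listaVM, ih, Matrix.mulVec_zero, sub_self, smul_zero, sub_zero,
          softThresh_zero]
    rw [hz K]
    simp [l1, l2]
  · exact stmt_7_main N d S n K hK hn σ hσ X βstar hsparse δ c γ hδ0 hδ1 hc hγ
      Dn hDn hi hii hiii hiv hv hvi hβ0
end

section
/- Fix d, N ∈ ℕ. There exists a two-head masked ReLU attention layer of width 2d+2 such that for every structured input H ∈ ℝ^{(2d+2)×(2N+1)} — column 2n−1 = (x_n; 0; β_{2n−1}; 1) and column 2n = (x_n; y_n; β_{2n}; 0) for n = 1,…,N, column 2N+1 = (x_{N+1}; 0; β_{2N+1}; 1), with β₁ = 0 — the output H^last of the attention layer satisfies, for every n ∈ {1,…,N}, that column 2n+1 of H^last equals (x_{n+1}; (2/(2n+1)) Σ_{i=1}^{n} β_{2i+1}^⊤ x_{n+1}; β_{2n+1}; 1); in particular its (d+1)-st entry is the average prediction ŷ_{n+1} = (2/(2n+1)) Σ_{i=1}^{n} β_{2i+1}^⊤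 x_{n+1}. -/
open Matrix

/-- Decoder mask: mask(A)_{i,j} = A_{i,j}/j if i ≤ j and 0 otherwise (columns 1-based). -/
noncomputable def maskMat {T : ℕ} (A : Matrix (Fin T) (Fin T) ℝ) :
    Matrix (Fin T) (Fin T) ℝ :=
  fun i j => if (i : ℕ) ≤ (j : ℕ) then A i j / ((j : ℕ) + 1 : ℝ) else 0

/-- M-head masked ReLU attention layer:
Attn(H) = H + Σ_m (V_m H)·mask(ReLU((K_m H)^⊤(Q_m H))). -/
noncomputable def attn {D T M : ℕ} (V Q K : Fin M → Matrix (Fin D) (Fin D) ℝ)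
    (H : Matrix (Fin D) (Fin T) ℝ) : Matrix (Fin D) (Fin T) ℝ :=
  H + ∑ m : Fin M, (V m * H) * maskMat (((K m * H)ᵀ * (Q m * H)).map relu)

/-- The structured input sequence of width 2d+2 and length 2N+1: for n = 1,…,N (1-based),
column 2n−1 = (xₙ; 0; β_{2n−1}; 1), column 2n = (xₙ; yₙ; β_{2n}; 0), and
column 2N+1 = (x_{N+1}; 0; β_{2N+1}; 1), where xₙ is the n-th row of X and x_{N+1} = xq. -/
noncomputable def structured {N d : ℕ} (X : Matrix (Fin N) (Fin d) ℝ) (y : Fin N → ℝ)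
    (xq : Fin d → ℝ) (β : Fin (2 * N + 1) → Fin d → ℝ) :
    Matrix (Fin (2 * d + 2)) (Fin (2 * N + 1)) ℝ :=
  fun i j =>
    if hi : (i : ℕ) < d then
      (if hj : (j : ℕ) / 2 < N then X ⟨(j : ℕ) / 2, hj⟩ ⟨(i : ℕ), hi⟩
       else xq ⟨(i : ℕ), hi⟩)
    else if hid : (i : ℕ) = d then
      (if hj : (j : ℕ) % 2 = 1 ∧ (j : ℕ) / 2 < N then y ⟨(j : ℕ) / 2, hj.2⟩ else 0)
    else if hi2 : (i : ℕ) < 2 * d + 1 then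
      β j ⟨(i : ℕ) - (d + 1), by omega⟩
    else (if (j : ℕ) % 2 = 0 then 1 else 0)

namespace Stmt9

lemma relu_sub (a : ℝ) : relu a - relu (-a) = a := by
  unfold relu
  rcases le_total a 0 with h | h
  · rw [max_eq_right h, max_eq_left (by linarith)]; ring
  · rw [max_eq_left h, max_eq_right (by linarith)]; ring

noncomputable def Vm (d : ℕ) : Matrix (Fin (2*d+2)) (Fin (2*d+2)) ℝ :=
  fun i l => if (i:ℕ) = d ∧ (l:ℕ) = 2*d+1 then 2 else 0

noncomputable def Qm (d : ℕ) : Matrix (Fin (2*d+2)) (Fin (2*d+2)) ℝ :=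
  fun i l => if (i:ℕ) < d ∧ l = i then 1 else 0

noncomputable def Km (d : ℕ) : Matrix (Fin (2*d+2)) (Fin (2*d+2)) ℝ :=
  fun i l => if (i:ℕ) < d ∧ (l:ℕ) = (i:ℕ) + d + 1 then 1 else 0

variable {d T : ℕ}

lemma VmH (H : Matrix (Fin (2*d+2)) (Fin T) ℝ) (i : Fin (2*d+2)) (k : Fin T) :
    (Vm d * H) i k = if (i:ℕ) = d then 2 * H ⟨2*d+1, by omega⟩ k else 0 := by
  rw [Matrix.mul_apply]
  by_cases hi : (i:ℕ) = d
  · rw [if_pos hi, Finset.sum_eq_single (⟨2*d+1, by omega⟩ : Fin (2*d+2))]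
    · simp [Vm, hi]
    · intro b _ hb
      have : (b:ℕ) ≠ 2*d+1 := fun h => hb (Fin.ext h)
      simp [Vm, this]
    · simp
  · rw [if_neg hi]
    exact Finset.sum_eq_zero fun b _ => by simp [Vm, hi]

lemma QmH (H : Matrix (Fin (2*d+2)) (Fin T) ℝ) (i : Fin (2*d+2)) (k : Fin T) :
    (Qm d * H) i k = if (i:ℕ) < d then H i k else 0 := by
  rw [Matrix.mul_apply]
  by_cases hi : (i:ℕ) < d
  · rw [if_pos hi, Finset.sum_eq_single i]
    · simp [Qm, hi]
    · intro b _ hb; simp [Qm, hb]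
    · simp
  · rw [if_neg hi]
    exact Finset.sum_eq_zero fun b _ => by simp [Qm, hi]

lemma KmH (H : Matrix (Fin (2*d+2)) (Fin T) ℝ) (i : Fin (2*d+2)) (k : Fin T) :
    (Km d * H) i k = if h : (i:ℕ) < d then H ⟨(i:ℕ)+d+1, by omega⟩ k else 0 := by
  rw [Matrix.mul_apply]
  by_cases hi : (i:ℕ) < d
  · rw [dif_pos hi, Finset.sum_eq_single (⟨(i:ℕ)+d+1, by omega⟩ : Fin (2*d+2))]
    · simp [Km, hi]
    · intro b _ hb
      have : (b:ℕ) ≠ (i:ℕ)+d+1 := fun h => hb (Fin.ext h)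
      simp [Km, this]
    · simp
  · rw [dif_neg hi]
    exact Finset.sum_eq_zero fun b _ => by simp [Km, hi]

lemma scoreH (H : Matrix (Fin (2*d+2)) (Fin T) ℝ) (k j : Fin T) :
    ((Km d * H)ᵀ * (Qm d * H)) k j
      = ∑ s : Fin d, H ⟨(s:ℕ)+d+1, by omega⟩ k * H (Fin.castLE (by omega) s) j := by
  rw [Matrix.mul_apply]
  set g : ℕ → ℝ := fun m => if h : m < d then H ⟨m+d+1, by omega⟩ k * H ⟨m, by omega⟩ j else 0
    with hg
  have key : ∀ i : Fin (2*d+2), (Km d * H)ᵀ k i * (Qm d * H) i j = g (i:ℕ) := by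
    intro i
    show _ = if h : (i:ℕ) < d then H ⟨(i:ℕ)+d+1, by omega⟩ k * H ⟨(i:ℕ), by omega⟩ j else 0
    rw [Matrix.transpose_apply, KmH, QmH]
    by_cases hi : (i:ℕ) < d
    · rw [dif_pos hi, if_pos hi, dif_pos hi]
    · rw [dif_neg hi, dif_neg hi, zero_mul]
  calc ∑ i : Fin (2*d+2), (Km d * H)ᵀ k i * (Qm d * H) i j
      = ∑ i : Fin (2*d+2), g (i:ℕ) := Finset.sum_congr rfl fun i _ => key i
    _ = ∑ m ∈ Finset.range (2*d+2), g m := Fin.sum_univ_eq_sum_range g (2*d+2)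
    _ = ∑ m ∈ Finset.range d, g m := by
        refine (Finset.sum_subset (Finset.range_subset_range.mpr (by omega)) ?_).symm
        intro x _ hx
        rw [hg]; exact dif_neg (by simpa using hx)
    _ = ∑ s : Fin d, g (s:ℕ) := (Fin.sum_univ_eq_sum_range g d).symm
    _ = _ := Finset.sum_congr rfl fun s _ => by show dite _ _ _ = _; rw [dif_pos s.isLt]; rfl

lemma attn_entry (H : Matrix (Fin (2*d+2)) (Fin T) ℝ) (i : Fin (2*d+2)) (j : Fin T) :
    attn ![Vm d, -Vm d] ![Qm d, Qm d] ![Km d, -Km d] H i j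
      = H i j + (if (i:ℕ) = d then
          ∑ k : Fin T, (if (k:ℕ) ≤ (j:ℕ) then
            2 * H ⟨2*d+1, by omega⟩ k *
              (∑ s : Fin d, H ⟨(s:ℕ)+d+1, by omega⟩ k * H (Fin.castLE (by omega) s) j)
              / ((j:ℕ)+1) else 0)
        else 0) := by
  rw [attn]
  simp only [Matrix.add_apply, Matrix.sum_apply, Fin.sum_univ_two, Matrix.cons_val_zero,
    Matrix.cons_val_one, Matrix.head_cons]
  congr 1
  set M1 := maskMat (((Km d * H)ᵀ * (Qm d * H)).map relu) with hM1def
  set M2 := maskMat ((((-Km d) * H)ᵀ * (Qm d * H)).map relu) with hM2def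
  have e0 : ((Vm d * H) * M1) i j = ∑ k, (Vm d * H) i k * M1 k j := Matrix.mul_apply
  have e1 : (((-Vm d) * H) * M2) i j = ∑ k, ((-Vm d) * H) i k * M2 k j := Matrix.mul_apply
  rw [e0, e1, ← Finset.sum_add_distrib]
  have hm1 : ∀ k : Fin T, M1 k j
      = if (k:ℕ) ≤ (j:ℕ) then relu (((Km d * H)ᵀ * (Qm d * H)) k j) / ((j:ℕ)+1) else 0 := by
    intro k; rw [hM1def]
    simp [maskMat, Matrix.map_apply]
  have hm2 : ∀ k : Fin T, M2 k j
      = if (k:ℕ) ≤ (j:ℕ) then relu (-(((Km d * H)ᵀ * (Qm d * H)) k j)) / ((j:ℕ)+1) else 0 := by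
    intro k; rw [hM2def]
    simp [maskMat, Matrix.map_apply, Matrix.neg_mul, Matrix.transpose_neg, Matrix.neg_apply]
  by_cases hi : (i:ℕ) = d
  · rw [if_pos hi]
    refine Finset.sum_congr rfl fun k _ => ?_
    rw [Matrix.neg_mul, Matrix.neg_apply, VmH, if_pos hi, hm1, hm2, scoreH]
    set S := ∑ s : Fin d, H ⟨(s:ℕ)+d+1, by omega⟩ k * H (Fin.castLE (by omega) s) j with hS
    by_cases hk : (k:ℕ) ≤ (j:ℕ)
    · rw [if_pos hk, if_pos hk, if_pos hk]
      have h := relu_sub S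
      have hrw : relu S = S + relu (-S) := by linarith
      rw [hrw]; ring
    · rw [if_neg hk, if_neg hk, if_neg hk]; ring
  · rw [if_neg hi]
    refine Finset.sum_eq_zero fun k _ => ?_
    rw [Matrix.neg_mul, Matrix.neg_apply, VmH, if_neg hi]
    ring

end Stmt9

namespace Stmt9
lemma sum_even (f : ℕ → ℝ) (n : ℕ) :
    ∑ k ∈ Finset.range (2*n+1), (if k % 2 = 0 then f k else 0)
      = ∑ t ∈ Finset.range (n+1), f (2*t) := by
  induction n with
  | zero => simp
  | succ n ih =>
      rw [show 2*(n+1)+1 = (2*n+1) + 1 + 1 by ring, Finset.sum_range_succ,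
        Finset.sum_range_succ, ih, Finset.sum_range_succ]
      rw [if_neg (by omega), if_pos (by omega)]
      rw [show 2*n+1+1 = 2*(n+1) by ring,
        Finset.sum_range_succ (fun x => f (2*x)) (n+1), Finset.sum_range_succ (fun x => f (2*x)) n]
      ring
end Stmt9

/-- a two-head masked ReLU attention layer of width 2d+2 such that, on every
structured input with β₁ = 0, column 2n+1 (1-based) of the output equals
(x_{n+1}; (2/(2n+1)) Σ_{i=1}^n β_{2i+1}^⊤ x_{n+1}; β_{2n+1}; 1); i.e. the output agrees
with the input except that entry d+1 (1-based) of column 2n+1 becomes the average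
prediction ŷ_{n+1} = (2/(2n+1)) Σ_{i=1}^n β_{2i+1}^⊤ x_{n+1}. -/
theorem stmt_9 (N d : ℕ) (hN : 0 < N) (hd : 0 < d) :
    ∃ V Q K : Fin 2 → Matrix (Fin (2 * d + 2)) (Fin (2 * d + 2)) ℝ,
      ∀ (X : Matrix (Fin N) (Fin d) ℝ) (y : Fin N → ℝ) (xq : Fin d → ℝ)
        (β : Fin (2 * N + 1) → Fin d → ℝ),
        β ⟨0, by omega⟩ = 0 →
        ∀ (n : ℕ) (hn1 : 1 ≤ n) (hn : n ≤ N) (i : Fin (2 * d + 2)),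
          attn V Q K (structured X y xq β) i ⟨2 * n, by omega⟩ =
            if (i : ℕ) = d then
              (2 / (2 * (n : ℝ) + 1)) * ∑ t : Fin n, ∑ s : Fin d,
                (β ⟨2 * ((t : ℕ) + 1), by have := t.isLt; omega⟩ s)
                  * structured X y xq β (Fin.castLE (by omega) s) ⟨2 * n, by omega⟩
            else structured X y xq β i ⟨2 * n, by omega⟩ := by
  refine ⟨![Stmt9.Vm d, -Stmt9.Vm d], ![Stmt9.Qm d, Stmt9.Qm d], ![Stmt9.Km d, -Stmt9.Km d], ?_⟩
  intro X y xq β hβ0 n hn1 hn i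
  rw [Stmt9.attn_entry]
  by_cases hi : (i:ℕ) = d
  · rw [if_pos hi, if_pos hi]
    have h0 : structured X y xq β i (⟨2*n, by omega⟩ : Fin (2*N+1)) = 0 := by
      simp only [structured]
      split_ifs <;> first | rfl | omega
    rw [h0, zero_add]
    -- row lemmas
    have hla : ∀ k : Fin (2*N+1),
        structured X y xq β ⟨2*d+1, by omega⟩ k = if (k:ℕ) % 2 = 0 then (1:ℝ) else 0 := by
      intro k; simp only [structured]
      split_ifs <;> first | rfl | omega
    have hβ : ∀ (k : Fin (2*N+1)) (s : Fin d),
        structured X y xq β ⟨(s:ℕ)+d+1, by omega⟩ k = β k s := by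
      intro k s; simp only [structured]
      rw [dif_neg (by omega), dif_neg (by omega), dif_pos (by omega)]
      congr 1
      exact Fin.ext (by show (s:ℕ)+d+1-(d+1) = (s:ℕ); omega)
    set F : ℕ → ℝ := fun k => if hk : k < 2*N+1 then
        ∑ s : Fin d, β ⟨k, hk⟩ s *
          structured X y xq β (Fin.castLE (by omega) s) ⟨2*n, by omega⟩ else 0 with hF
    set G : ℕ → ℝ := fun k =>
        if k ≤ 2*n ∧ k % 2 = 0 then 2 * F k / (2*(n:ℝ)+1) else 0 with hG
    have hc : (((2*n : ℕ) : ℝ) + 1) = 2*(n:ℝ)+1 := by push_cast; ring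
    have h00 : ∀ (hk : 0 < 2*N+1) (s : Fin d), β ⟨0, hk⟩ s = 0 := fun hk s => congrFun hβ0 s
    have key : (∑ k : Fin (2*N+1), if (k:ℕ) ≤ 2*n then
          2 * structured X y xq β ⟨2*d+1, by omega⟩ k *
            (∑ s : Fin d, structured X y xq β ⟨(s:ℕ)+d+1, by omega⟩ k *
              structured X y xq β (Fin.castLE (by omega) s) ⟨2*n, by omega⟩)
            / (((2*n : ℕ) : ℝ) + 1) else 0)
        = (2 / (2 * (n : ℝ) + 1)) * ∑ t : Fin n, ∑ s : Fin d,
            (β ⟨2 * ((t : ℕ) + 1), by have := t.isLt; omega⟩ s)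
              * structured X y xq β (Fin.castLE (by omega) s) ⟨2 * n, by omega⟩ := by
      have hstep : ∀ k : Fin (2*N+1), (if (k:ℕ) ≤ 2*n then
          2 * structured X y xq β ⟨2*d+1, by omega⟩ k *
            (∑ s : Fin d, structured X y xq β ⟨(s:ℕ)+d+1, by omega⟩ k *
              structured X y xq β (Fin.castLE (by omega) s) ⟨2*n, by omega⟩)
            / (((2*n : ℕ) : ℝ) + 1) else 0) = G (k:ℕ) := by
        intro k
        rw [hla k]
        have hin : (∑ s : Fin d, structured X y xq β ⟨(s:ℕ)+d+1, by omega⟩ k *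
            structured X y xq β (Fin.castLE (by omega) s) ⟨2*n, by omega⟩) = F (k:ℕ) := by
          show _ = dite _ _ _
          rw [dif_pos k.isLt]
          exact Finset.sum_congr rfl fun s _ => by rw [hβ k s]
        rw [hin, hc]
        show _ = if (k:ℕ) ≤ 2*n ∧ (k:ℕ) % 2 = 0 then 2 * F (k:ℕ) / (2*(n:ℝ)+1) else 0
        by_cases h1 : (k:ℕ) ≤ 2*n
        · by_cases h2 : (k:ℕ) % 2 = 0
          · rw [if_pos h1, if_pos h2, if_pos ⟨h1, h2⟩]; ring
          · rw [if_pos h1, if_neg h2, if_neg (fun hcc => h2 hcc.2)]; ring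
        · rw [if_neg h1, if_neg (fun hcc => h1 hcc.1)]
      rw [Finset.sum_congr rfl fun k _ => hstep k,
        Fin.sum_univ_eq_sum_range G (2*N+1)]
      rw [show (∑ k ∈ Finset.range (2*N+1), G k) = ∑ k ∈ Finset.range (2*n+1), G k from
        (Finset.sum_subset (Finset.range_subset_range.mpr (by omega)) fun x _ hx => by
          show (if x ≤ 2*n ∧ x % 2 = 0 then 2 * F x / (2*(n:ℝ)+1) else 0) = 0
          exact if_neg (fun hcc => by simp [Finset.mem_range] at hx; omega)).symm]
      rw [show (∑ k ∈ Finset.range (2*n+1), G k)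
          = ∑ k ∈ Finset.range (2*n+1), (if k % 2 = 0 then 2 * F k / (2*(n:ℝ)+1) else 0) from
        Finset.sum_congr rfl fun k hk => by
          have hk' : k ≤ 2*n := by simp [Finset.mem_range] at hk; omega
          show (if k ≤ 2*n ∧ k % 2 = 0 then 2 * F k / (2*(n:ℝ)+1) else 0) = _
          by_cases h2 : k % 2 = 0
          · rw [if_pos ⟨hk', h2⟩, if_pos h2]
          · rw [if_neg (fun hcc => h2 hcc.2), if_neg h2]]
      rw [Stmt9.sum_even (fun k => 2 * F k / (2*(n:ℝ)+1)) n]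
      rw [Finset.sum_range_succ']
      have hF0 : F 0 = 0 := by
        show dite _ _ _ = 0
        rw [dif_pos (by omega : 0 < 2*N+1)]
        exact Finset.sum_eq_zero fun s _ => by rw [h00, zero_mul]
      rw [show (2*0 : ℕ) = 0 from rfl, hF0]
      rw [← Fin.sum_univ_eq_sum_range (fun t => 2 * F (2*(t+1)) / (2*(n:ℝ)+1)) n]
      rw [Finset.mul_sum]
      rw [mul_zero, zero_div, add_zero]
      refine Finset.sum_congr rfl fun t _ => ?_
      have ht : 2*((t:ℕ)+1) < 2*N+1 := by have := t.isLt; omega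
      show 2 * F (2*((t:ℕ)+1)) / (2*(n:ℝ)+1) = _
      rw [show F (2*((t:ℕ)+1)) = ∑ s : Fin d, β ⟨2*((t:ℕ)+1), ht⟩ s *
          structured X y xq β (Fin.castLE (by omega) s) ⟨2*n, by omega⟩ from by
        show dite _ _ _ = _
        rw [dif_pos ht]]
      rw [show (β ⟨2*((t:ℕ)+1), ht⟩ : Fin d → ℝ)
          = β ⟨2*((t:ℕ)+1), by have := t.isLt; omega⟩ from rfl]
      ring
    exact key
  · rw [if_neg hi, if_neg hi, add_zero]
end

section
/- Let d, n, N₀, m be positive integers with N₀ < n and m ≤ n − N₀, let ε ≥ 0, B′ ∈ ℝ, b_x, C_x > 0. Let x, β* ∈ ℝ^d with ‖x‖₂ ≤ b_x, set y = x^⊤β*, and let β_1,…,β_n ∈ ℝ^d with ‖β_j‖₂ ≤ C_x for all j. Let J = { j ∈ {1,…,n} : x^⊤β_j ≥ B′ } and define ŷ = (1/m) Σ_{j∈J} (x^⊤β_j − B′) + B′. If J ∩ {1,…,N₀} = ∅ and | |J| − m | ≤ ε, then there exists a set O ⊆ {N₀+1,…,n} with |O| = m such that |y − ŷ| ≤ b_x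 · (1/m) Σ_{j∈O} ‖β* − β_j‖₂ + (b_x C_x ε)/m + (ε |B′|)/m. -/
lemma l2_nonneg {d : ℕ} (v : Fin d → ℝ) : 0 ≤ l2 v := Real.sqrt_nonneg _

lemma cs_l2 {d : ℕ} (v w : Fin d → ℝ) : |∑ i, v i * w i| ≤ l2 v * l2 w := by
  have h := Finset.sum_mul_sq_le_sq_mul_sq Finset.univ v w
  rw [← Real.sqrt_sq_eq_abs]
  unfold l2
  rw [← Real.sqrt_mul (by positivity)]
  exact Real.sqrt_le_sqrt h

theorem stmt_11 (d n N₀ m : ℕ) (hd : 0 < d) (hn : 0 < n) (hN₀ : 0 < N₀) (hm : 0 < m)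
    (hN₀n : N₀ < n) (hmn : m ≤ n - N₀)
    (ε : ℝ) (hε : 0 ≤ ε) (B' bx Cx : ℝ) (hbx : 0 < bx) (hCx : 0 < Cx)
    (x βstar : Fin d → ℝ) (hx : l2 x ≤ bx)
    (β : ℕ → Fin d → ℝ) (hβ : ∀ j ∈ Finset.Icc 1 n, l2 (β j) ≤ Cx)
    (J : Finset ℕ) (hJ : J = (Finset.Icc 1 n).filter fun j => B' ≤ ∑ i, x i * β j i)
    (hJN₀ : J ∩ Finset.Icc 1 N₀ = ∅)
    (hJcard : |((J.card : ℝ)) - (m : ℝ)| ≤ ε) :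
    ∃ O : Finset ℕ, O ⊆ Finset.Icc (N₀ + 1) n ∧ O.card = m ∧
      |(∑ i, x i * βstar i)
          - ((1 / (m : ℝ)) * (∑ j ∈ J, ((∑ i, x i * β j i) - B')) + B')|
        ≤ bx * ((1 / (m : ℝ)) * ∑ j ∈ O, l2 (βstar - β j))
            + bx * Cx * ε / (m : ℝ) + ε * |B'| / (m : ℝ) := by
  have hmpos : (0:ℝ) < m := by exact_mod_cast hm
  set y : ℝ := ∑ i, x i * βstar i with hy
  set a : ℕ → ℝ := fun j => ∑ i, x i * β j i with ha
  have hJsub : J ⊆ Finset.Icc (N₀ + 1) n := by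
    intro j hj
    have hj1 : j ∈ Finset.Icc 1 n := by
      rw [hJ] at hj; exact Finset.mem_filter.mp hj |>.1
    rw [Finset.mem_Icc] at hj1 ⊢
    refine ⟨?_, hj1.2⟩
    by_contra h
    have : j ∈ J ∩ Finset.Icc 1 N₀ := by
      rw [Finset.mem_inter, Finset.mem_Icc]
      exact ⟨hj, by omega⟩
    rw [hJN₀] at this; exact absurd this (Finset.notMem_empty j)
  have hIccsub : Finset.Icc (N₀ + 1) n ⊆ Finset.Icc 1 n := by
    intro j hj; rw [Finset.mem_Icc] at hj ⊢; omega
  -- pointwise bounds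
  have hbnd1 : ∀ j ∈ Finset.Icc 1 n, |y - a j| ≤ bx * l2 (βstar - β j) := by
    intro j hj
    have he : y - a j = ∑ i, x i * (βstar - β j) i := by
      simp [hy, ha, Pi.sub_apply, mul_sub, Finset.sum_sub_distrib]
    rw [he]
    calc |∑ i, x i * (βstar - β j) i| ≤ l2 x * l2 (βstar - β j) := cs_l2 _ _
      _ ≤ bx * l2 (βstar - β j) := by
          exact mul_le_mul_of_nonneg_right hx (l2_nonneg _)
  have hbnd2 : ∀ j ∈ Finset.Icc 1 n, |a j - B'| ≤ bx * Cx + |B'| := by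
    intro j hj
    calc |a j - B'| ≤ |a j| + |B'| := abs_sub _ _
      _ ≤ bx * Cx + |B'| := by
          have h1 : |a j| ≤ l2 x * l2 (β j) := cs_l2 _ _
          have h2 : l2 x * l2 (β j) ≤ bx * Cx :=
            mul_le_mul hx (hβ j hj) (l2_nonneg _) hbx.le
          linarith
  -- the key estimate
  have key : ∀ O D : Finset ℕ, O ⊆ Finset.Icc (N₀ + 1) n → D ⊆ Finset.Icc 1 n →
      O.card = m → (D.card : ℝ) ≤ ε →
      (1 / (m:ℝ)) * (∑ j ∈ O, |y - a j|) + (1 / (m:ℝ)) * (∑ j ∈ D, |a j - B'|)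
        ≤ bx * ((1 / (m : ℝ)) * ∑ j ∈ O, l2 (βstar - β j))
            + bx * Cx * ε / (m : ℝ) + ε * |B'| / (m : ℝ) := by
    intro O D hO hD hOc hDc
    have h1 : (∑ j ∈ O, |y - a j|) ≤ ∑ j ∈ O, bx * l2 (βstar - β j) :=
      Finset.sum_le_sum fun j hj => hbnd1 j (hIccsub (hO hj))
    have h2 : (∑ j ∈ D, |a j - B'|) ≤ (D.card : ℝ) * (bx * Cx + |B'|) := by
      calc (∑ j ∈ D, |a j - B'|) ≤ ∑ _j ∈ D, (bx * Cx + |B'|) :=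
            Finset.sum_le_sum fun j hj => hbnd2 j (hD hj)
        _ = (D.card : ℝ) * (bx * Cx + |B'|) := by rw [Finset.sum_const, nsmul_eq_mul]
    have h3 : (D.card : ℝ) * (bx * Cx + |B'|) ≤ ε * (bx * Cx + |B'|) := by
      apply mul_le_mul_of_nonneg_right hDc
      positivity
    have h4 : (1 / (m:ℝ)) * (∑ j ∈ O, |y - a j|) ≤ bx * ((1 / (m : ℝ)) * ∑ j ∈ O, l2 (βstar - β j)) := by
      rw [← Finset.mul_sum] at h1
      have := mul_le_mul_of_nonneg_left h1 (by positivity : (0:ℝ) ≤ 1 / m)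
      linarith [this]
    have h5 : (1 / (m:ℝ)) * (∑ j ∈ D, |a j - B'|) ≤ bx * Cx * ε / (m : ℝ) + ε * |B'| / (m : ℝ) := by
      have := mul_le_mul_of_nonneg_left (le_trans h2 h3) (by positivity : (0:ℝ) ≤ 1 / m)
      have he : (1 / (m:ℝ)) * (ε * (bx * Cx + |B'|)) = bx * Cx * ε / (m : ℝ) + ε * |B'| / (m : ℝ) := by
        field_simp
      linarith [this, he ▸ this]
    linarith
  rcases le_or_gt m J.card with hc | hc
  · -- |J| ≥ m : shrink J
    obtain ⟨O, hOJ, hOc⟩ := Finset.exists_subset_card_eq hc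
    refine ⟨O, hOJ.trans hJsub, hOc, ?_⟩
    have hid : y - ((1 / (m : ℝ)) * (∑ j ∈ J, (a j - B')) + B')
        = (1 / (m:ℝ)) * (∑ j ∈ O, (y - a j)) - (1 / (m:ℝ)) * (∑ j ∈ J \ O, (a j - B')) := by
      rw [← Finset.sum_sdiff hOJ (f := fun j => a j - B')]
      rw [Finset.sum_sub_distrib (s := O), Finset.sum_sub_distrib (s := O),
        Finset.sum_const, Finset.sum_const, hOc]
      field_simp
      ring
    have hD : ((J \ O).card : ℝ) ≤ ε := by
      have : (J \ O).card = J.card - m := by rw [Finset.card_sdiff_of_subset hOJ, hOc]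
      rw [this]
      have : ((J.card - m : ℕ) : ℝ) = (J.card : ℝ) - m := by
        push_cast [Nat.cast_sub hc]; ring
      rw [this]
      calc (J.card : ℝ) - m ≤ |(J.card : ℝ) - m| := le_abs_self _
        _ ≤ ε := hJcard
    calc |y - ((1 / (m : ℝ)) * (∑ j ∈ J, (a j - B')) + B')|
        ≤ (1 / (m:ℝ)) * (∑ j ∈ O, |y - a j|) + (1 / (m:ℝ)) * (∑ j ∈ J \ O, |a j - B'|) := by
          rw [hid]
          calc |(1 / (m:ℝ)) * (∑ j ∈ O, (y - a j)) - (1 / (m:ℝ)) * (∑ j ∈ J \ O, (a j - B'))|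
              ≤ |(1 / (m:ℝ)) * (∑ j ∈ O, (y - a j))| + |(1 / (m:ℝ)) * (∑ j ∈ J \ O, (a j - B'))| :=
                abs_sub _ _
            _ ≤ (1 / (m:ℝ)) * (∑ j ∈ O, |y - a j|) + (1 / (m:ℝ)) * (∑ j ∈ J \ O, |a j - B'|) := by
                rw [abs_mul, abs_mul, abs_of_nonneg (by positivity : (0:ℝ) ≤ 1 / m)]
                gcongr <;> exact Finset.abs_sum_le_sum_abs _ _
      _ ≤ _ := key O (J \ O) (hOJ.trans hJsub) ((Finset.sdiff_subset).trans
              (hJsub.trans hIccsub)) hOc hD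
  · -- |J| < m : extend J
    have hcard : m ≤ (Finset.Icc (N₀ + 1) n).card := by
      rw [Nat.card_Icc]; omega
    obtain ⟨O, hJO, hOsub, hOc⟩ :=
      Finset.exists_subsuperset_card_eq hJsub hc.le hcard
    refine ⟨O, hOsub, hOc, ?_⟩
    have hid : y - ((1 / (m : ℝ)) * (∑ j ∈ J, (a j - B')) + B')
        = (1 / (m:ℝ)) * (∑ j ∈ O, (y - a j)) + (1 / (m:ℝ)) * (∑ j ∈ O \ J, (a j - B')) := by
      have hs := Finset.sum_sdiff hJO (f := fun j => a j - B')
      have hs' : (∑ j ∈ J, (a j - B')) = (∑ j ∈ O, (a j - B')) - ∑ j ∈ O \ J, (a j - B') := by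
        rw [← hs]; ring
      rw [hs']
      rw [Finset.sum_sub_distrib (s := O), Finset.sum_sub_distrib (s := O),
        Finset.sum_const, Finset.sum_const, hOc]
      field_simp
      ring
    have hD : ((O \ J).card : ℝ) ≤ ε := by
      have h1 : (O \ J).card = m - J.card := by rw [Finset.card_sdiff_of_subset hJO, hOc]
      rw [h1]
      have h2 : ((m - J.card : ℕ) : ℝ) = (m : ℝ) - J.card := by
        push_cast [Nat.cast_sub hc.le]; ring
      rw [h2]
      calc (m : ℝ) - J.card ≤ |(J.card : ℝ) - m| := by
            rw [abs_sub_comm]; exact le_abs_self _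
        _ ≤ ε := hJcard
    calc |y - ((1 / (m : ℝ)) * (∑ j ∈ J, (a j - B')) + B')|
        ≤ (1 / (m:ℝ)) * (∑ j ∈ O, |y - a j|) + (1 / (m:ℝ)) * (∑ j ∈ O \ J, |a j - B'|) := by
          rw [hid]
          calc |(1 / (m:ℝ)) * (∑ j ∈ O, (y - a j)) + (1 / (m:ℝ)) * (∑ j ∈ O \ J, (a j - B'))|
              ≤ |(1 / (m:ℝ)) * (∑ j ∈ O, (y - a j))| + |(1 / (m:ℝ)) * (∑ j ∈ O \ J, (a j - B'))| :=
                abs_add_le _ _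
            _ ≤ (1 / (m:ℝ)) * (∑ j ∈ O, |y - a j|) + (1 / (m:ℝ)) * (∑ j ∈ O \ J, |a j - B'|) := by
                rw [abs_mul, abs_mul, abs_of_nonneg (by positivity : (0:ℝ) ≤ 1 / m)]
                gcongr <;> exact Finset.abs_sum_le_sum_abs _ _
      _ ≤ _ := key O (O \ J) hOsub ((Finset.sdiff_subset).trans
              (hOsub.trans hIccsub)) hOc hD
end

section
/- Let K ≥ 1 be an integer, r ∈ (0,1], x ≥ 0 with (K−1)x < r, and let η ≥ r/(r − (K−1)x). Then (r + x)^K ≤ r^K + η K r^{K−1} x. -/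
lemma stmt_12_aux (x r : ℝ) (hx : 0 ≤ x) (hr : 0 < r) :
    ∀ n : ℕ, (r + x) ^ n * (r - n * x) ≤ r ^ (n + 1) := by
  intro n
  induction n with
  | zero => simp
  | succ n ih =>
    have hrx : (0:ℝ) ≤ r + x := by linarith
    rcases le_or_gt (r - ((n:ℝ) + 1) * x) 0 with h | h
    · have h1 : (r + x) ^ (n + 1) * (r - ((n:ℝ) + 1) * x) ≤ 0 :=
        mul_nonpos_of_nonneg_of_nonpos (pow_nonneg hrx _) h
      have h2 : (0:ℝ) < r ^ (n + 1 + 1) := pow_pos hr _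
      push_cast
      linarith
    · have h1 : (r + x) * (r - ((n:ℝ) + 1) * x) ≤ r * (r - n * x) := by nlinarith [mul_nonneg (mul_nonneg (Nat.cast_nonneg n : (0:ℝ) ≤ n) hx) hx, sq_nonneg x]
      have h2 : (r + x) ^ (n + 1) * (r - ((n:ℝ) + 1) * x)
          = (r + x) ^ n * ((r + x) * (r - ((n:ℝ) + 1) * x)) := by ring
      have h3 : (r + x) ^ n * ((r + x) * (r - ((n:ℝ) + 1) * x))
          ≤ (r + x) ^ n * (r * (r - n * x)) :=
        mul_le_mul_of_nonneg_left h1 (pow_nonneg hrx _)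
      have h4 : (r + x) ^ n * (r * (r - n * x)) = r * ((r + x) ^ n * (r - n * x)) := by ring
      have h5 : r * ((r + x) ^ n * (r - n * x)) ≤ r * r ^ (n + 1) :=
        mul_le_mul_of_nonneg_left ih hr.le
      have h6 : r * r ^ (n + 1) = r ^ (n + 1 + 1) := by ring
      push_cast
      linarith

/-- Let K ≥ 1 be an integer, r ∈ (0,1], x ≥ 0 with (K−1)x < r, and let
η ≥ r/(r − (K−1)x). Then (r + x)^K ≤ r^K + η K r^{K−1} x. -/
theorem stmt_12 (K : ℕ) (hK : 1 ≤ K) (r x η : ℝ)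
    (hr0 : 0 < r) (hr1 : r ≤ 1) (hx : 0 ≤ x)
    (hKx : ((K : ℝ) - 1) * x < r)
    (hη : r / (r - ((K : ℝ) - 1) * x) ≤ η) :
    (r + x) ^ K ≤ r ^ K + η * K * r ^ (K - 1) * x := by
  have hd : 0 < r - ((K : ℝ) - 1) * x := by linarith
  have hrη : r ≤ η * (r - ((K : ℝ) - 1) * x) := (div_le_iff₀ hd).mp hη
  have hrx : (0:ℝ) ≤ r + x := by linarith
  -- key: (r+x)^(K-1) ≤ η * r^(K-1)
  have haux := stmt_12_aux x r hx hr0 (K - 1)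
  have hcast : ((K - 1 : ℕ) : ℝ) = (K : ℝ) - 1 := by
    rw [Nat.cast_sub hK]; simp
  rw [hcast] at haux
  have hKK : K - 1 + 1 = K := Nat.sub_add_cancel hK
  rw [hKK] at haux
  have hpowK : r ^ K = r * r ^ (K - 1) := by
    conv_lhs => rw [← hKK]
    ring
  have hkey2 : (r + x) ^ (K - 1) ≤ η * r ^ (K - 1) := by
    have h2 : (r + x) ^ (K - 1) * (r - ((K : ℝ) - 1) * x)
        ≤ (η * r ^ (K - 1)) * (r - ((K : ℝ) - 1) * x) := by
      nlinarith [pow_nonneg hr0.le (K - 1)]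
    exact le_of_mul_le_mul_right h2 hd
  have hsum := geom_sum₂_mul (r + x) r K
  have hS : ∀ i ∈ Finset.range K, (r + x) ^ i * r ^ (K - 1 - i) ≤ η * r ^ (K - 1) := by
    intro i hi
    have hi' : i ≤ K - 1 := by
      have := Finset.mem_range.mp hi; omega
    have h1 : (r + x) ^ i * r ^ (K - 1 - i) ≤ (r + x) ^ i * (r + x) ^ (K - 1 - i) :=
      mul_le_mul_of_nonneg_left (pow_le_pow_left₀ hr0.le (by linarith) _)
        (pow_nonneg hrx _)
    have h2 : (r + x) ^ i * (r + x) ^ (K - 1 - i) = (r + x) ^ (K - 1) := by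
      rw [← pow_add]; congr 1; omega
    linarith [hkey2]
  have hSsum : (∑ i ∈ Finset.range K, (r + x) ^ i * r ^ (K - 1 - i))
      ≤ (K : ℝ) * (η * r ^ (K - 1)) := by
    calc (∑ i ∈ Finset.range K, (r + x) ^ i * r ^ (K - 1 - i))
        ≤ ∑ _i ∈ Finset.range K, η * r ^ (K - 1) := Finset.sum_le_sum hS
      _ = (K : ℝ) * (η * r ^ (K - 1)) := by
          simp [Finset.sum_const, nsmul_eq_mul]
  have hmul : (∑ i ∈ Finset.range K, (r + x) ^ i * r ^ (K - 1 - i)) * x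
      ≤ ((K : ℝ) * (η * r ^ (K - 1))) * x :=
    mul_le_mul_of_nonneg_right hSsum hx
  have hsimp : r + x - r = x := by ring
  rw [hsimp] at hsum
  nlinarith [hsum, hmul]
end

section
/- Let N₀, m ≥ 1 be integers, K ≥ 1 an integer, r ∈ (0,1], b ≥ 0 with (K−1)·b/√N₀ < r, and set η = r/(r − (K−1)b/√N₀). Then Σ_{i=N₀+1}^{N₀+m} (r + b/√i)^K ≤ m·r^K + 2ηK r^{K−1} b (√(N₀+m) − √N₀) ≤ m·r^K + 2ηK r^{K−1} b √m. -/
/-!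
Write K = n + 1 and x = b/√i ≤ b/√N₀. The single inequality (r + x)^n (r - n x) ≤ r^(n+1),
proved by induction, yields both (r + x)^(n+1) ≤ r^(n+1) + (n+1) x (r + x)^n and
(r + x)^n ≤ η r^n, so the i-th summand exceeds r^K by at most η K r^(K-1) b / √i.
The bounds 1/√i ≤ 2(√i - √(i-1)) telescope, and √(N₀ + m) - √N₀ ≤ √m by subadditivity of √.
-/
open Real Finset

theorem add_pow_mul_sub_mul_le_pow {r x : ℝ} (hr : 0 ≤ r) (hx : 0 ≤ x) (n : ℕ) :
    (r + x) ^ n * (r - n * x) ≤ r ^ (n + 1) := by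
  induction n with
  | zero => simp
  | succ n ih =>
    calc (r + x) ^ (n + 1) * (r - (n + 1 : ℕ) * x)
        = (r + x) ^ n * (r - n * x) * r - (n + 1) * x ^ 2 * (r + x) ^ n := by push_cast; ring
      _ ≤ (r + x) ^ n * (r - n * x) * r := sub_le_self _ (by positivity)
      _ ≤ r ^ (n + 1) * r := by gcongr
      _ = r ^ (n + 2) := by ring

theorem add_pow_succ_le {r x y : ℝ} {n : ℕ} (hr : 0 < r) (hx : 0 ≤ x) (hxy : x ≤ y)
    (hy : n * y < r) :
    (r + x) ^ (n + 1) ≤ r ^ (n + 1) + (n + 1) * (r / (r - n * y)) * r ^ n * x := by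
  have hry : 0 < r - n * y := by linarith
  have hbase := add_pow_mul_sub_mul_le_pow hr.le hx n
  have hpow : (r + x) ^ n ≤ r / (r - n * y) * r ^ n := by
    rw [div_mul_eq_mul_div, le_div_iff₀ hry, ← pow_succ']
    calc (r + x) ^ n * (r - n * y) ≤ (r + x) ^ n * (r - n * x) := by gcongr
      _ ≤ r ^ (n + 1) := hbase
  calc (r + x) ^ (n + 1) = (r + x) ^ n * (r - n * x) + (n + 1) * x * (r + x) ^ n := by ring
    _ ≤ r ^ (n + 1) + (n + 1) * x * (r / (r - n * y) * r ^ n) := by gcongr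
    _ = _ := by ring

theorem one_div_sqrt_add_one_le {k : ℝ} (hk : 0 ≤ k) :
    1 / √(k + 1) ≤ 2 * (√(k + 1) - √k) := by
  have hpos : 0 < √(k + 1) := sqrt_pos.mpr (by linarith)
  have hle : √k ≤ √(k + 1) := sqrt_le_sqrt (by linarith)
  rw [div_le_iff₀ hpos]
  nlinarith [sq_sqrt hk, sq_sqrt (by linarith : 0 ≤ k + 1)]

theorem sum_Icc_one_div_sqrt_le (N m : ℕ) :
    ∑ i ∈ Icc (N + 1) (N + m), 1 / √i ≤ 2 * (√(N + m) - √N) := by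
  induction m with
  | zero => simp
  | succ m ih =>
    rw [← add_assoc, sum_Icc_succ_top (by omega)]
    have hstep := one_div_sqrt_add_one_le (k := N + m) (by positivity)
    push_cast at ih ⊢
    rw [← add_assoc]
    linarith

theorem sqrt_add_sub_sqrt_le {a b : ℝ} (ha : 0 ≤ a) (hb : 0 ≤ b) : √(a + b) - √a ≤ √b := by
  have := rpow_add_le_add_rpow ha hb (p := 1 / 2) (by norm_num) (by norm_num)
  simp only [← sqrt_eq_rpow] at this
  linarith

theorem sum_Icc_add_div_sqrt_pow_le {r b : ℝ} {N : ℕ} (m n : ℕ) (hr : 0 < r) (hb : 0 ≤ b)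
    (hN : 1 ≤ N) (hnb : n * (b / √N) < r) :
    ∑ i ∈ Icc (N + 1) (N + m), (r + b / √i) ^ (n + 1)
      ≤ m * r ^ (n + 1)
          + 2 * (r / (r - n * (b / √N))) * (n + 1) * r ^ n * b * (√(N + m) - √N) := by
  set η := r / (r - n * (b / √N))
  have hterm : ∀ i ∈ Icc (N + 1) (N + m),
      (r + b / √i) ^ (n + 1) ≤ r ^ (n + 1) + (n + 1) * η * r ^ n * b * (1 / √i) := by
    intro i hi
    have hNi : (N : ℝ) ≤ i := by exact_mod_cast (Nat.le_succ N).trans (mem_Icc.mp hi).1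
    have hdec : b / √i ≤ b / √N := by gcongr
    exact (add_pow_succ_le hr (by positivity) hdec hnb).trans_eq (by ring)
  have hη : 0 ≤ η := div_nonneg hr.le (by linarith)
  calc ∑ i ∈ Icc (N + 1) (N + m), (r + b / √i) ^ (n + 1)
      ≤ ∑ i ∈ Icc (N + 1) (N + m), (r ^ (n + 1) + (n + 1) * η * r ^ n * b * (1 / √i)) :=
        sum_le_sum hterm
    _ = m * r ^ (n + 1) + (n + 1) * η * r ^ n * b * ∑ i ∈ Icc (N + 1) (N + m), 1 / √i := by
        rw [sum_add_distrib, sum_const, ← mul_sum, Nat.card_Icc, nsmul_eq_mul]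
        congr 3
        omega
    _ ≤ m * r ^ (n + 1) + (n + 1) * η * r ^ n * b * (2 * (√(N + m) - √N)) := by
        gcongr
        exact sum_Icc_one_div_sqrt_le N m
    _ = _ := by ring

theorem stmt_13_general (N₀ m K : ℕ) (hN₀ : 1 ≤ N₀) (hK : 1 ≤ K)
    (r b η : ℝ) (hr0 : 0 < r) (hb : 0 ≤ b)
    (hKb : ((K : ℝ) - 1) * (b / Real.sqrt N₀) < r)
    (hη : η = r / (r - ((K : ℝ) - 1) * (b / Real.sqrt N₀))) :
    (∑ i ∈ Finset.Icc (N₀ + 1) (N₀ + m), (r + b / Real.sqrt i) ^ K)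
      ≤ (m : ℝ) * r ^ K
          + 2 * η * K * r ^ (K - 1) * b * (Real.sqrt (N₀ + m) - Real.sqrt N₀)
    ∧ (m : ℝ) * r ^ K
          + 2 * η * K * r ^ (K - 1) * b * (Real.sqrt (N₀ + m) - Real.sqrt N₀)
      ≤ (m : ℝ) * r ^ K + 2 * η * K * r ^ (K - 1) * b * Real.sqrt m := by
  obtain ⟨n, rfl⟩ : ∃ n, K = n + 1 := ⟨K - 1, by omega⟩
  simp only [Nat.cast_add, Nat.cast_one, add_sub_cancel_right] at hKb hη ⊢
  have hη0 : 0 ≤ η := hη ▸ div_nonneg hr0.le (by linarith)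
  refine ⟨hη ▸ sum_Icc_add_div_sqrt_pow_le m n hr0 hb hN₀ hKb, ?_⟩
  gcongr
  exact sqrt_add_sub_sqrt_le (by positivity) (by positivity)

/-- Let N₀, m ≥ 1 be integers, K ≥ 1 an integer, r ∈ (0,1], b ≥ 0 with
(K−1)·b/√N₀ < r, and set η = r/(r − (K−1)b/√N₀). Then
Σ_{i=N₀+1}^{N₀+m} (r + b/√i)^K ≤ m·r^K + 2ηK r^{K−1} b (√(N₀+m) − √N₀)
  ≤ m·r^K + 2ηK r^{K−1} b √m. -/
theorem stmt_13 (N₀ m K : ℕ) (hN₀ : 1 ≤ N₀) (hm : 1 ≤ m) (hK : 1 ≤ K)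
    (r b η : ℝ) (hr0 : 0 < r) (hr1 : r ≤ 1) (hb : 0 ≤ b)
    (hKb : ((K : ℝ) - 1) * (b / Real.sqrt N₀) < r)
    (hη : η = r / (r - ((K : ℝ) - 1) * (b / Real.sqrt N₀))) :
    (∑ i ∈ Finset.Icc (N₀ + 1) (N₀ + m), (r + b / Real.sqrt i) ^ K)
      ≤ (m : ℝ) * r ^ K
          + 2 * η * K * r ^ (K - 1) * b * (Real.sqrt (N₀ + m) - Real.sqrt N₀)
    ∧ (m : ℝ) * r ^ K
          + 2 * η * K * r ^ (K - 1) * b * (Real.sqrt (N₀ + m) - Real.sqrt N₀)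
      ≤ (m : ℝ) * r ^ K + 2 * η * K * r ^ (K - 1) * b * Real.sqrt m :=
  stmt_13_general N₀ m K hN₀ hK r b η hr0 hb hKb hη
end
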